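/- arXiv:2511.17105 — 11 statements merged into one kernel-verified Lean document; each statement's English description precedes it below -/
import Mathlib

section
/- Let S be a finite set of jobs, each job j having success probability π_j ∈ [0,1) and reward r_j ≥ 0. If σ is an ordering of the elements of S that lists them in non-increasing order of the Z-index Z_j = π_j r_j/(1−π_j), then for every ordering τ of the elements of S one has R(S,τ) ≤ R(S,σ); that is, sequencing by non-increasing Z-index maximizes the expected reward. -/
/-!
Read the expected reward of a sequence recursively, `R(j :: l) = π_j (r_j + R(l))`. Exchanging two
adjacent jobs `i, j` then changes the reward by a nonnegative multiple of
`π_j r_j (1 - π_i) - π_i r_i (1 - π_j)`, which is nonnegative exactly when `Z_i ≤ Z_j`. Now induct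
on the sequence `τ = j :: l`: reordering `l` as the Z-sorted sequence `σ` with `j` removed does not
decrease the reward, and then `j` can be moved into its place in `σ` by exchanges with jobs of
larger Z-index.
-/

/-- Expected reward of processing the jobs of `Fin m` in the order given by the
permutation `σ`: `R(S,σ) = Σ_k r_{σ(k)} · ∏_{i ≤ k} π_{σ(i)}`. -/
def expReward {m : ℕ} (pr r : Fin m → ℝ) (σ : Equiv.Perm (Fin m)) : ℝ :=
  ∑ k : Fin m, r (σ k) * ∏ i ∈ Finset.Iic k, pr (σ i)

open Finset

theorem Fin.prod_Iic_succ {M : Type*} [CommMonoid M] {n : ℕ} (g : Fin (n + 1) → M) (k : Fin n) :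
    ∏ i ∈ Iic k.succ, g i = g 0 * ∏ i ∈ Iic k, g i.succ := by
  rw [← Icc_bot, bot_eq_zero, Icc_eq_cons_Ioc (Fin.zero_le _), Finset.prod_cons,
    ← Fin.map_succEmb_Iic, prod_map]
  rfl

section ListReward

variable {α : Type*} (pr r : α → ℝ)

def listReward : List α → ℝ
  | [] => 0
  | j :: l => pr j * (r j + listReward l)

noncomputable def zIndex (j : α) : ℝ := pr j * r j / (1 - pr j)

theorem sum_mul_prod_Iic_eq_listReward {n : ℕ} (f : Fin n → α) :
    ∑ k, r (f k) * ∏ i ∈ Iic k, pr (f i) = listReward pr r (List.ofFn f) := by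
  induction n with
  | zero => simp [listReward]
  | succ n ih =>
    rw [Fin.sum_univ_succ, List.ofFn_succ, listReward, ← ih]
    simp only [Fin.prod_Iic_succ, ← bot_eq_zero, Iic_bot, prod_singleton]
    rw [mul_add, mul_sum]
    exact congr_arg₂ _ (mul_comm _ _) (sum_congr rfl fun _ _ => mul_left_comm _ _ _)

variable {pr r}

theorem listReward_cons_le_cons {j : α} (hj : 0 ≤ pr j) {l l' : List α}
    (hl : listReward pr r l ≤ listReward pr r l') :
    listReward pr r (j :: l) ≤ listReward pr r (j :: l') :=
  mul_le_mul_of_nonneg_left (add_le_add_right hl _) hj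

theorem listReward_cons_cons_le_swap {i j : α} (hi : pr i < 1) (hj : pr j < 1)
    (hZ : zIndex pr r i ≤ zIndex pr r j) (l : List α) :
    listReward pr r (i :: j :: l) ≤ listReward pr r (j :: i :: l) := by
  have hZ' : pr i * r i * (1 - pr j) ≤ pr j * r j * (1 - pr i) :=
    (div_le_div_iff₀ (sub_pos.2 hi) (sub_pos.2 hj)).1 hZ
  simp only [listReward]
  linarith

variable [DecidableEq α] (h0 : ∀ j, 0 ≤ pr j) (h1 : ∀ j, pr j < 1)
include h0 h1

theorem listReward_cons_erase_le {s : List α}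
    (hs : s.Pairwise fun i j => zIndex pr r j ≤ zIndex pr r i) {j : α} (hj : j ∈ s) :
    listReward pr r (j :: s.erase j) ≤ listReward pr r s := by
  induction s with
  | nil => cases hj
  | cons h t ih =>
    rcases eq_or_ne h j with rfl | hne
    · rw [List.erase_cons_head]
    rw [List.pairwise_cons] at hs
    have hjt : j ∈ t := (List.mem_cons.1 hj).resolve_left hne.symm
    rw [List.erase_cons_tail (by simpa using hne)]
    calc listReward pr r (j :: h :: t.erase j)
        ≤ listReward pr r (h :: j :: t.erase j) :=
          listReward_cons_cons_le_swap (h1 j) (h1 h) (hs.1 j hjt) _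
      _ ≤ listReward pr r (h :: t) := listReward_cons_le_cons (h0 h) (ih hs.2 hjt)

theorem listReward_le_of_perm_of_pairwise {l s : List α} (hl : l.Perm s)
    (hs : s.Pairwise fun i j => zIndex pr r j ≤ zIndex pr r i) :
    listReward pr r l ≤ listReward pr r s := by
  induction l generalizing s with
  | nil => rw [List.Perm.nil_eq hl]
  | cons j l ih =>
    have hj : j ∈ s := hl.subset List.mem_cons_self
    have hl' : l.Perm (s.erase j) := by simpa using hl.erase j
    calc listReward pr r (j :: l)
        ≤ listReward pr r (j :: s.erase j) := listReward_cons_le_cons (h0 j) (ih hl' (hs.erase j))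
      _ ≤ listReward pr r s := listReward_cons_erase_le h0 h1 hs hj

end ListReward

theorem expReward_eq_listReward {m : ℕ} (pr r : Fin m → ℝ) (σ : Equiv.Perm (Fin m)) :
    expReward pr r σ = listReward pr r (List.ofFn σ) :=
  sum_mul_prod_Iic_eq_listReward pr r σ

theorem zrule_optimal_general {m : ℕ} (pr r : Fin m → ℝ)
    (hpr : ∀ j, 0 ≤ pr j ∧ pr j < 1)
    (σ : Equiv.Perm (Fin m))
    (hσ : ∀ k l : Fin m, k ≤ l →
      pr (σ l) * r (σ l) / (1 - pr (σ l)) ≤ pr (σ k) * r (σ k) / (1 - pr (σ k)))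
    (τ : Equiv.Perm (Fin m)) :
    expReward pr r τ ≤ expReward pr r σ := by
  have hperm : (List.ofFn τ).Perm (List.ofFn σ) :=
    (τ.ofFn_comp_perm id).trans (σ.ofFn_comp_perm id).symm
  have hsorted : (List.ofFn σ).Pairwise fun i j => zIndex pr r j ≤ zIndex pr r i :=
    List.pairwise_ofFn.2 fun k l hkl => hσ k l hkl.le
  rw [expReward_eq_listReward, expReward_eq_listReward]
  exact listReward_le_of_perm_of_pairwise (fun j => (hpr j).1) (fun j => (hpr j).2) hperm hsorted

/-- Sequencing the jobs in non-increasing order of the Z-index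
`Z_j = π_j r_j / (1 - π_j)` maximizes the expected reward. -/
theorem zrule_optimal {m : ℕ} (pr r : Fin m → ℝ)
    (hpr : ∀ j, 0 ≤ pr j ∧ pr j < 1) (hr : ∀ j, 0 ≤ r j)
    (σ : Equiv.Perm (Fin m))
    (hσ : ∀ k l : Fin m, k ≤ l →
      pr (σ l) * r (σ l) / (1 - pr (σ l)) ≤ pr (σ k) * r (σ k) / (1 - pr (σ k)))
    (τ : Equiv.Perm (Fin m)) :
    expReward pr r τ ≤ expReward pr r σ :=
  zrule_optimal_general pr r hpr σ hσ τ
end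

section
/- Suppose all jobs have the same success probability, i.e., π_j = π ∈ [0,1) for all j = 1,…,n. Then for every greedy run S_0 = ∅, S_1, …, S_m, the terminal set S_m is optimal: z(S_m) = max_{S ⊆ {1,…,n}} z(S). -/
/-!
With a common success probability `p`, the net profit is `z(S) = ∑_{j ∈ S} r_j p^{rank_S j} - c(S)`,
where `rank_S j` is the position of `j` in `S`, and for `p > 0` the `Z`-order says that `r` is
antitone (for `p = 0` the reward vanishes). Writing `p^k = (1 - p) ∑_{k ≤ t < N} p^t + p^N`
makes the reward a nonnegative combination of the top sums `g_t(S)`, the total reward of the first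
`t` jobs of `S`. When `|A| < |T|`, one pivot `j ∈ T \ A` satisfies
`g_t(A) + g_t(T) ≤ g_t(A + j) + g_t(T - j)` for every `t` simultaneously, hence `z` has this
exchange property too. Exchanging against the greedy sets then shows that the `i`-th greedy set is
best among sets of size at most `i`, and that a set larger than the terminal one can be shrunk
without loss.
-/

/-- Expected reward of a subset `S`, sequencing its jobs in increasing index order:
`R(S) = Σ_{j∈S} r_j ∏_{i∈S, i≤j} π_i`. -/
def Rexp {n : ℕ} (pr r : Fin n → ℝ) (S : Finset (Fin n)) : ℝ :=
  ∑ j ∈ S, r j * ∏ i ∈ S.filter (fun i => i ≤ j), pr i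

/-- Total cost of a subset `S`. -/
def cst {n : ℕ} (c : Fin n → ℝ) (S : Finset (Fin n)) : ℝ := ∑ j ∈ S, c j

/-- Expected net profit `z(S) = R(S) − c(S)`. -/
def netz {n : ℕ} (pr r c : Fin n → ℝ) (S : Finset (Fin n)) : ℝ :=
  Rexp pr r S - cst c S

open Finset

namespace UJSSP

section Exchange

variable {α : Type*} [DecidableEq α]

def HasExchange (f : Finset α → ℝ) : Prop :=
  ∀ ⦃A T : Finset α⦄, #A < #T → ∃ j ∈ T, j ∉ A ∧ f A + f T ≤ f (insert j A) + f (T.erase j)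

theorem hasExchange_const (a : ℝ) : HasExchange fun _ : Finset α => a := fun _ _ h =>
  let ⟨j, hjT, hjA⟩ := exists_mem_notMem_of_card_lt_card h
  ⟨j, hjT, hjA, le_rfl⟩

theorem HasExchange.sub_sum {f : Finset α → ℝ} (hf : HasExchange f) (c : α → ℝ) :
    HasExchange fun S => f S - ∑ j ∈ S, c j := fun A T h => by
  obtain ⟨j, hjT, hjA, hle⟩ := hf h
  refine ⟨j, hjT, hjA, ?_⟩
  simp only
  rw [sum_insert hjA, ← sum_erase_add T c hjT]
  linarith

end Exchange

section Greedy

variable {α : Type*} [DecidableEq α]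

structure IsGreedyRun (f : Finset α → ℝ) (S : ℕ → Finset α) (m : ℕ) : Prop where
  start : S 0 = ∅
  step : ∀ i < m, ∃ k ∉ S i, S (i + 1) = insert k (S i) ∧ f (S i) < f (insert k (S i)) ∧
    ∀ j ∉ S i, f (insert j (S i)) ≤ f (insert k (S i))
  terminal : ∀ j ∉ S m, f (insert j (S m)) ≤ f (S m)

variable {f : Finset α → ℝ} {S : ℕ → Finset α} {m : ℕ}

theorem IsGreedyRun.card_eq (hS : IsGreedyRun f S m) {i : ℕ} (hi : i ≤ m) : #(S i) = i := by
  induction i with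
  | zero => rw [hS.start, card_empty]
  | succ i ih =>
    obtain ⟨k, hk, hSk, -⟩ := hS.step i hi
    rw [hSk, card_insert_of_notMem hk, ih (by omega)]

theorem IsGreedyRun.le_of_card_le (hf : HasExchange f) (hS : IsGreedyRun f S m) {i : ℕ}
    (hi : i ≤ m) {T : Finset α} (hT : #T ≤ i) : f T ≤ f (S i) := by
  induction i generalizing T with
  | zero => rw [card_eq_zero.1 (Nat.le_zero.1 hT), hS.start]
  | succ i ih =>
    obtain ⟨k, -, hSk, hgain, hbest⟩ := hS.step i hi
    rw [hSk]
    rcases hT.lt_or_eq with hT | hT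
    · exact (ih (by omega) (by omega)).trans hgain.le
    · obtain ⟨j, hjT, hjS, hle⟩ := hf (T := T) (by rw [hS.card_eq (by omega : i ≤ m)]; omega)
      have := ih (by omega) (T := T.erase j) (by rw [card_erase_of_mem hjT]; omega)
      linarith [hbest j hjS]

theorem IsGreedyRun.le_final (hf : HasExchange f) (hS : IsGreedyRun f S m) (T : Finset α) :
    f T ≤ f (S m) := by
  induction hT : #T using Nat.strong_induction_on generalizing T with
  | _ k ih =>
    rcases le_or_gt k m with hk | hk
    · exact hS.le_of_card_le hf le_rfl (hT ▸ hk)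
    · obtain ⟨j, hjT, hjS, hle⟩ := hf (T := T) (by rw [hS.card_eq le_rfl]; omega)
      have := ih (k - 1) (by omega) (T.erase j) (by rw [card_erase_of_mem hjT]; omega)
      linarith [hS.terminal j hjS]

end Greedy

section Rank

variable {α : Type*} [LinearOrder α]

def rank (S : Finset α) (i : α) : ℕ := #{x ∈ S | x ≤ i}

theorem rank_mono (S : Finset α) : Monotone (rank S) := fun _ _ h =>
  card_le_card fun _ hx => by
    simp only [mem_filter] at hx ⊢
    exact ⟨hx.1, hx.2.trans h⟩

theorem rank_lt_rank {S : Finset α} {i j : α} (hj : j ∈ S) (h : i < j) : rank S i < rank S j := by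
  refine card_lt_card ⟨fun x hx => ?_, fun hsub => ?_⟩
  · simp only [mem_filter] at hx ⊢
    exact ⟨hx.1, hx.2.trans h.le⟩
  · exact h.not_ge (mem_filter.1 (hsub (mem_filter.2 ⟨hj, le_rfl⟩))).2

theorem rank_injOn (S : Finset α) : Set.InjOn (rank S) S :=
  StrictMonoOn.injOn fun _ _ _ hj h => rank_lt_rank hj h

theorem rank_pos {S : Finset α} {j : α} (hj : j ∈ S) : 0 < rank S j :=
  card_pos.2 ⟨j, mem_filter.2 ⟨hj, le_rfl⟩⟩

theorem rank_le_card (S : Finset α) (i : α) : rank S i ≤ #S :=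
  card_filter_le _ _

theorem rank_insert {S : Finset α} {j : α} (hj : j ∉ S) (i : α) :
    rank (insert j S) i = rank S i + if j ≤ i then 1 else 0 := by
  unfold rank
  rw [filter_insert]
  split_ifs
  · rw [card_insert_of_notMem (fun h => hj (mem_filter.1 h).1)]
  · rfl

theorem rank_eq_card_lt_add (S : Finset α) (j : α) :
    rank S j = #{x ∈ S | x < j} + if j ∈ S then 1 else 0 := by
  have h := rank_insert (S := S.erase j) (notMem_erase j S) j
  have hlt : {x ∈ S.erase j | x ≤ j} = {x ∈ S | x < j} := by
    ext x
    simp only [mem_filter, mem_erase, lt_iff_le_and_ne]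
    tauto
  unfold rank at h ⊢
  split_ifs with hj
  · rwa [insert_erase hj, if_pos le_rfl, hlt] at h
  · rw [erase_eq_of_notMem hj] at hlt
    rw [← hlt, add_zero]

theorem exists_rank_eq {T : Finset α} {x : α} {s : ℕ} (h1 : 0 < s) (h2 : s ≤ rank T x) :
    ∃ i ∈ T, i ≤ x ∧ rank T i = s := by
  obtain ⟨i, hi, hs⟩ := surj_on_of_inj_on_of_card_le (s := {i ∈ T | i ≤ x}) (t := Icc 1 (rank T x))
    (fun i _ => rank T i)
    (fun i hi => mem_Icc.2 ⟨rank_pos (mem_filter.1 hi).1, rank_mono T (mem_filter.1 hi).2⟩)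
    (fun a b ha hb hab => rank_injOn T (mem_filter.1 ha).1 (mem_filter.1 hb).1 hab)
    (by rw [Nat.card_Icc, rank]; omega) s (mem_Icc.2 ⟨h1, h2⟩)
  exact ⟨i, (mem_filter.1 hi).1, (mem_filter.1 hi).2, hs.symm⟩

theorem card_filter_lt_le_of_not_ahead {A T : Finset α} {j : α}
    (hahead : ∀ x, j ≤ x → rank A x < rank T x)
    (hbehind : ∀ y ∈ T, y < j → ∃ x, y ≤ x ∧ rank T x ≤ rank A x) :
    #{x ∈ T | x < j} ≤ #{x ∈ A | x < j} := by
  rcases Finset.eq_empty_or_nonempty {x ∈ T | x < j} with hempty | hlow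
  · simp [hempty]
  obtain ⟨hyT, hyj⟩ := mem_filter.1 (max'_mem _ hlow)
  obtain ⟨x, hyx, hx⟩ := hbehind _ hyT hyj
  have hxj : x < j := lt_of_not_ge fun hjx => (hahead x hjx).not_ge hx
  have hTx : {i ∈ T | i ≤ x} = {i ∈ T | i < j} := by
    ext i
    simp only [mem_filter]
    exact ⟨fun hi => ⟨hi.1, hi.2.trans_lt hxj⟩,
      fun hi => ⟨hi.1, (le_max' _ i (mem_filter.2 hi)).trans hyx⟩⟩
  have hAx : {i ∈ A | i ≤ x} ⊆ {i ∈ A | i < j} := fun i hi => by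
    simp only [mem_filter] at hi ⊢
    exact ⟨hi.1, hi.2.trans_lt hxj⟩
  calc #{x ∈ T | x < j} = rank T x := by rw [rank, hTx]
    _ ≤ rank A x := hx
    _ ≤ #{x ∈ A | x < j} := card_le_card hAx

/-- The pivot is the least `j ∈ T` from which on `T` stays strictly ahead of `A` in prefix
counts; minimality forces `T` not to be ahead just before `j`, so `j` itself makes the step. -/
theorem exists_pivot {A T : Finset α} (h : #A < #T) :
    ∃ j ∈ T, j ∉ A ∧ rank T j = rank A j + 1 ∧ ∀ x, j ≤ x → rank A x < rank T x := by
  classical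
  set P : α → Prop := fun y => ∀ x, y ≤ x → rank A x < rank T x
  have hT : T.Nonempty := card_pos.1 (by omega)
  have hPmax : P (T.max' hT) := fun x hx => by
    have : {i ∈ T | i ≤ x} = T := filter_true_of_mem fun i hi => (le_max' T i hi).trans hx
    rw [rank, rank, this]
    exact (card_filter_le _ _).trans_lt h
  have hC : {y ∈ T | P y}.Nonempty := ⟨_, mem_filter.2 ⟨max'_mem T hT, hPmax⟩⟩
  set j := {y ∈ T | P y}.min' hC
  obtain ⟨hjT, hPj⟩ := mem_filter.1 (min'_mem _ hC)
  have hbefore : #{x ∈ T | x < j} ≤ #{x ∈ A | x < j} := by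
    refine card_filter_lt_le_of_not_ahead hPj fun y hyT hyj => ?_
    by_contra! hPy
    exact (min'_le _ y (mem_filter.2 ⟨hyT, hPy⟩)).not_gt hyj
  have hj := hPj j le_rfl
  rw [rank_eq_card_lt_add T j, rank_eq_card_lt_add A j, if_pos hjT] at hj
  have hjA : j ∉ A := fun hjA => by rw [if_pos hjA] at hj; omega
  refine ⟨j, hjT, hjA, ?_, hPj⟩
  rw [rank_eq_card_lt_add T j, rank_eq_card_lt_add A j, if_pos hjT, if_neg hjA]
  rw [if_neg hjA] at hj
  omega

end Rank

section TopSum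

variable {α : Type*} [LinearOrder α]

def topSum (r : α → ℝ) (t : ℕ) (S : Finset α) : ℝ :=
  ∑ i ∈ S, if rank S i ≤ t then r i else 0

/-- Inserting `j` pushes the element of rank `t` behind `j` (if any) out of the top `t`. -/
theorem topSum_insert_add (r : α → ℝ) (t : ℕ) {A : Finset α} {j : α} (hj : j ∉ A) :
    topSum r t (insert j A) + ∑ i ∈ A with j < i ∧ rank A i = t, r i
      = topSum r t A + if rank A j + 1 ≤ t then r j else 0 := by
  have hterm : ∀ i ∈ A, ((if rank (insert j A) i ≤ t then r i else 0)
      + if j < i ∧ rank A i = t then r i else 0) = if rank A i ≤ t then r i else 0 := by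
    intro i hi
    have hji : j ≠ i := fun h => hj (h ▸ hi)
    rw [rank_insert hj]
    rcases lt_or_gt_of_ne hji with hlt | hgt
    · simp only [hlt, hlt.le, true_and, if_true]
      split_ifs <;> first | omega | ring
    · simp only [hgt.not_gt, hgt.not_ge, false_and, if_false, add_zero]
  rw [topSum, sum_insert hj, rank_insert hj, if_pos le_rfl, sum_filter, add_assoc,
    ← sum_add_distrib, sum_congr rfl hterm, topSum, add_comm]

theorem topSum_add_erase (r : α → ℝ) (t : ℕ) {T : Finset α} {j : α} (hj : j ∈ T) :
    topSum r t T + ∑ i ∈ T with j < i ∧ rank T i = t + 1, r i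
      = topSum r t (T.erase j) + if rank T j ≤ t then r j else 0 := by
  have h := topSum_insert_add r t (notMem_erase j T)
  have hrank : ∀ i, rank T i = rank (T.erase j) i + if j ≤ i then 1 else 0 := fun i => by
    rw [← rank_insert (notMem_erase j T), insert_erase hj]
  have hfilter : {i ∈ T.erase j | j < i ∧ rank (T.erase j) i = t}
      = {i ∈ T | j < i ∧ rank T i = t + 1} := by
    ext i
    simp only [mem_filter, mem_erase, hrank i]
    constructor
    · rintro ⟨⟨-, hiT⟩, hji, hrk⟩
      exact ⟨hiT, hji, by rw [if_pos hji.le, hrk]⟩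
    · rintro ⟨hiT, hji, hrk⟩
      rw [if_pos hji.le] at hrk
      exact ⟨⟨hji.ne', hiT⟩, hji, by omega⟩
  rw [insert_erase hj, hfilter] at h
  rwa [hrank j, if_pos le_rfl]

/-- With `r` antitone, the element of rank `t` of `A` behind the pivot is dominated by the element
of rank `t + 1` of `T`, which also lies behind the pivot and no later. -/
theorem sum_rank_eq_le_sum_rank_eq_succ {r : α → ℝ} (hr : ∀ j, 0 ≤ r j) (hanti : Antitone r)
    {A T : Finset α} {j : α} (hjT : rank T j = rank A j + 1)
    (hahead : ∀ x, j ≤ x → rank A x < rank T x) (t : ℕ) :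
    ∑ i ∈ A with j < i ∧ rank A i = t, r i ≤ ∑ i ∈ T with j < i ∧ rank T i = t + 1, r i := by
  rcases Finset.eq_empty_or_nonempty {i ∈ A | j < i ∧ rank A i = t} with hempty | ⟨i₀, hi₀⟩
  · rw [hempty, sum_empty]
    exact sum_nonneg fun i _ => hr i
  obtain ⟨hi₀A, hji₀, hrank₀⟩ := mem_filter.1 hi₀
  have hsingle : {i ∈ A | j < i ∧ rank A i = t} = {i₀} := by
    refine eq_singleton_iff_unique_mem.2 ⟨hi₀, fun i hi => ?_⟩
    obtain ⟨hiA, -, hrank⟩ := mem_filter.1 hi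
    exact rank_injOn A hiA hi₀A (hrank.trans hrank₀.symm)
  have hjt : rank A j < t := hrank₀ ▸ rank_lt_rank hi₀A hji₀
  obtain ⟨i₁, hi₁T, hi₁i₀, hrank₁⟩ := exists_rank_eq (T := T) (x := i₀) (s := t + 1)
    t.succ_pos (by have := hahead i₀ hji₀.le; omega)
  have hji₁ : j < i₁ := lt_of_not_ge fun hij => by
    have := rank_mono T hij
    omega
  rw [hsingle]
  calc ∑ i ∈ {i₀}, r i = r i₀ := sum_singleton _ _
    _ ≤ r i₁ := hanti hi₁i₀
    _ ≤ ∑ i ∈ T with j < i ∧ rank T i = t + 1, r i :=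
      single_le_sum (fun i _ => hr i) (mem_filter.2 ⟨hi₁T, hji₁, hrank₁⟩)

theorem topSum_add_le_of_pivot {r : α → ℝ} (hr : ∀ j, 0 ≤ r j) (hanti : Antitone r)
    {A T : Finset α} {j : α} (hjA : j ∉ A) (hjT : j ∈ T) (hrank : rank T j = rank A j + 1)
    (hahead : ∀ x, j ≤ x → rank A x < rank T x) (t : ℕ) :
    topSum r t A + topSum r t T ≤ topSum r t (insert j A) + topSum r t (T.erase j) := by
  have hA := topSum_insert_add r t hjA
  have hT := topSum_add_erase r t hjT
  have hle := sum_rank_eq_le_sum_rank_eq_succ hr hanti hrank hahead t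
  rw [← hrank] at hA
  linarith

end TopSum

section Reward

variable {α : Type*} [LinearOrder α]

def rankReward (p : ℝ) (r : α → ℝ) (S : Finset α) : ℝ := ∑ j ∈ S, r j * p ^ rank S j

theorem rankReward_zero (r : α → ℝ) : rankReward 0 r = fun _ => 0 := by
  funext S
  exact sum_eq_zero fun j hj => by rw [zero_pow (rank_pos hj).ne', mul_zero]

/-- `p ^ k = (1 - p) ∑_{k ≤ t < N} p ^ t + p ^ N` turns the reward into a combination of top sums,
with nonnegative weights when `0 ≤ p ≤ 1`. -/
theorem rankReward_eq_sum_topSum (p : ℝ) (r : α → ℝ) {S : Finset α} {N : ℕ} (hN : #S ≤ N) :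
    rankReward p r S = ∑ t ∈ range N, (1 - p) * p ^ t * topSum r t S + p ^ N * topSum r N S := by
  have hpow : ∀ k ≤ N,
      p ^ k = ∑ t ∈ range N, (1 - p) * p ^ t * (if k ≤ t then 1 else 0) + p ^ N := by
    intro k hk
    have hIco : {t ∈ range N | k ≤ t} = Ico k N := by
      ext t
      simp only [mem_filter, mem_range, mem_Ico]
      omega
    simp only [mul_ite, mul_one, mul_zero]
    rw [← sum_filter, hIco, ← mul_sum, mul_comm, geom_sum_Ico_mul_neg p hk]
    ring
  simp only [topSum, mul_sum, rankReward]
  rw [sum_comm, ← sum_add_distrib]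
  refine sum_congr rfl fun j hj => ?_
  have hk := (rank_le_card S j).trans hN
  rw [hpow _ hk, if_pos hk, mul_add, mul_sum]
  congr 1
  · exact sum_congr rfl fun t _ => by split_ifs <;> ring
  · ring

end Reward

theorem hasExchange_rankReward {α : Type*} [LinearOrder α] {p : ℝ} (hp0 : 0 ≤ p) (hp1 : p ≤ 1)
    {r : α → ℝ} (hr : ∀ j, 0 ≤ r j) (hanti : Antitone r) : HasExchange (rankReward p r) := by
  intro A T h
  obtain ⟨j, hjT, hjA, hrank, hahead⟩ := exists_pivot h
  refine ⟨j, hjT, hjA, ?_⟩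
  have hle := topSum_add_le_of_pivot hr hanti hjA hjT hrank hahead
  have hcard : #(insert j A) ≤ #T := (card_insert_le j A).trans h
  rw [rankReward_eq_sum_topSum p r h.le, rankReward_eq_sum_topSum p r le_rfl,
    rankReward_eq_sum_topSum p r hcard, rankReward_eq_sum_topSum p r (card_erase_le (s := T))]
  have hsum : ∑ t ∈ range #T, (1 - p) * p ^ t * (topSum r t A + topSum r t T)
      ≤ ∑ t ∈ range #T, (1 - p) * p ^ t * (topSum r t (insert j A) + topSum r t (T.erase j)) :=
    sum_le_sum fun t _ => mul_le_mul_of_nonneg_left (hle t) (by have := pow_nonneg hp0 t; nlinarith)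
  have hlast := mul_le_mul_of_nonneg_left (hle #T) (pow_nonneg hp0 #T)
  simp only [mul_add, sum_add_distrib] at hsum hlast
  linarith

theorem netz_eq_rankReward_sub {n : ℕ} {pr : Fin n → ℝ} {p : ℝ} (hpr : ∀ j, pr j = p)
    (r c : Fin n → ℝ) : netz pr r c = fun S => rankReward p r S - ∑ j ∈ S, c j := by
  funext S
  simp only [netz, Rexp, cst, rankReward, rank, hpr, prod_const]

end UJSSP

open UJSSP

theorem greedy_optimal_equal_probabilities_general (n : ℕ) (pr r c : Fin n → ℝ)
    (hr : ∀ j, 0 ≤ r j)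
    (hZ : ∀ i j : Fin n, i ≤ j →
      pr j * r j / (1 - pr j) ≤ pr i * r i / (1 - pr i))
    (pconst : ℝ) (hpc : 0 ≤ pconst ∧ pconst < 1) (hpe : ∀ j, pr j = pconst)
    (m : ℕ) (S : ℕ → Finset (Fin n))
    (h0 : S 0 = ∅)
    (hstep : ∀ i < m, ∃ k ∉ S i, S (i + 1) = insert k (S i) ∧
        netz pr r c (S i) < netz pr r c (insert k (S i)) ∧
        ∀ j ∉ S i, netz pr r c (insert j (S i)) ≤ netz pr r c (insert k (S i)))
    (hterm : ∀ j ∉ S m, netz pr r c (insert j (S m)) ≤ netz pr r c (S m)) :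
    netz pr r c (S m) =
      (Finset.univ : Finset (Fin n)).powerset.sup' (Finset.powerset_nonempty _)
        (netz pr r c) := by
  have hanti : 0 < pconst → Antitone r := fun hp i j hij => by
    have h := hZ i j hij
    rw [hpe, hpe, div_le_div_iff_of_pos_right (by linarith [hpc.2])] at h
    exact le_of_mul_le_mul_left h hp
  have hexch : HasExchange (netz pr r c) := by
    rw [netz_eq_rankReward_sub hpe]
    refine HasExchange.sub_sum ?_ c
    rcases hpc.1.eq_or_lt with rfl | hp
    · rw [rankReward_zero]
      exact hasExchange_const 0
    · exact hasExchange_rankReward hpc.1 hpc.2.le hr (hanti hp)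
  have hrun : IsGreedyRun (netz pr r c) S m := ⟨h0, hstep, hterm⟩
  exact le_antisymm (le_sup' _ (mem_powerset.2 (subset_univ _)))
    (sup'_le _ _ fun T _ => hrun.le_final hexch T)

/-- With identical success probabilities (`π_j = π` for all `j`), every greedy run terminates in an
optimal set: `z(S_m) = max_{S ⊆ {1,…,n}} z(S)`. -/
theorem greedy_optimal_equal_probabilities (n : ℕ) (pr r c : Fin n → ℝ)
    (hpr : ∀ j, 0 ≤ pr j ∧ pr j < 1) (hr : ∀ j, 0 ≤ r j) (hc0 : ∀ j, 0 ≤ c j)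
    (hZ : ∀ i j : Fin n, i ≤ j →
      pr j * r j / (1 - pr j) ≤ pr i * r i / (1 - pr i))
    (pconst : ℝ) (hpc : 0 ≤ pconst ∧ pconst < 1) (hpe : ∀ j, pr j = pconst)
    (m : ℕ) (S : ℕ → Finset (Fin n))
    (h0 : S 0 = ∅)
    (hstep : ∀ i < m, ∃ k ∉ S i, S (i + 1) = insert k (S i) ∧
        netz pr r c (S i) < netz pr r c (insert k (S i)) ∧
        ∀ j ∉ S i, netz pr r c (insert j (S i)) ≤ netz pr r c (insert k (S i)))
    (hterm : ∀ j ∉ S m, netz pr r c (insert j (S m)) ≤ netz pr r c (S m)) :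
    netz pr r c (S m) =
      (Finset.univ : Finset (Fin n)).powerset.sup' (Finset.powerset_nonempty _)
        (netz pr r c) :=
  greedy_optimal_equal_probabilities_general n pr r c hr hZ pconst hpc hpe m S h0 hstep hterm
end

section
/- The optimal value of the compact MILP formulation of UJSSP equals the optimal expected net profit: the maximum of Σ_{j=1}^n (r_j P_j − c_j x_j) over all x ∈ {0,1}^n and P ∈ ℝ^n with P_j ≥ 0 for all j, P_j ≤ π_j x_j for all j, and P_j ≤ π_j (P_i + 1 − x_i) for all i < j, is attained and equals max_{S ⊆ {1,…,n}} z(S). -/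
/-!
For a fixed selection `x = 1_S`, the constraints force, by induction along the order,
`P_j ≤ ∏_{i ∈ S, i ≤ j} π_i` for `j ∈ S` and `P_j = 0` otherwise: the constraint
coupling `j` to the last selected job `i < j` reads `P_j ≤ π_j P_i`. This bound is itself feasible and,
since `r ≥ 0`, the objective is monotone in `P`, so the best value for `S` is exactly `z(S)`.
-/

open Finset

section SuccessProb

variable {ι : Type*} [LinearOrder ι]

/-- Probability that job `j` is run and succeeds when the jobs of `S` are run in order. -/
noncomputable def successProb (pr : ι → ℝ) (S : Finset ι) (j : ι) : ℝ :=
  if j ∈ S then ∏ i ∈ S.filter (· ≤ j), pr i else 0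

noncomputable def incidence (S : Finset ι) (j : ι) : ℝ :=
  if j ∈ S then 1 else 0

lemma prod_filter_le_eq_mul_prod_filter_lt (pr : ι → ℝ) {S : Finset ι} {j : ι}
    (hj : j ∈ S) :
    ∏ i ∈ S.filter (· ≤ j), pr i = pr j * ∏ i ∈ S.filter (· < j), pr i := by
  have hsplit : S.filter (· ≤ j) = insert j (S.filter (· < j)) := by
    ext k
    simp only [mem_filter, mem_insert, le_iff_lt_or_eq]
    constructor
    · rintro ⟨hk, hlt | rfl⟩
      exacts [Or.inr ⟨hk, hlt⟩, Or.inl rfl]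
    · rintro (rfl | ⟨hk, hlt⟩)
      exacts [⟨hj, Or.inr rfl⟩, ⟨hk, Or.inl hlt⟩]
  rw [hsplit, prod_insert (by simp)]

variable {pr : ι → ℝ}

lemma successProb_nonneg (hpr0 : ∀ j, 0 ≤ pr j) (S : Finset ι) (j : ι) :
    0 ≤ successProb pr S j := by
  unfold successProb
  split_ifs
  exacts [prod_nonneg fun i _ => hpr0 i, le_rfl]

lemma successProb_le_mul_incidence (hpr0 : ∀ j, 0 ≤ pr j) (hpr1 : ∀ j, pr j ≤ 1)
    (S : Finset ι) (j : ι) : successProb pr S j ≤ pr j * incidence S j := by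
  unfold successProb incidence
  split_ifs with hj
  · rw [prod_filter_le_eq_mul_prod_filter_lt pr hj, mul_one]
    exact mul_le_of_le_one_right (hpr0 j) (prod_le_one (fun i _ => hpr0 i) fun i _ => hpr1 i)
  · simp

lemma successProb_le_of_lt (hpr0 : ∀ j, 0 ≤ pr j) (hpr1 : ∀ j, pr j ≤ 1) (S : Finset ι)
    {i j : ι} (hij : i < j) :
    successProb pr S j ≤ pr j * (successProb pr S i + 1 - incidence S i) := by
  by_cases hi : i ∈ S
  · have hsub : S.filter (· ≤ i) ⊆ S.filter (· < j) :=
      monotone_filter_right S fun _ _ hki => lt_of_le_of_lt hki hij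
    have hprefix : successProb pr S j ≤ pr j * ∏ k ∈ S.filter (· ≤ i), pr k := by
      unfold successProb
      split_ifs with hj
      · rw [prod_filter_le_eq_mul_prod_filter_lt pr hj]
        exact mul_le_mul_of_nonneg_left (prod_anti_set_of_le_one hpr0 hpr1 hsub) (hpr0 j)
      · exact mul_nonneg (hpr0 j) (prod_nonneg fun k _ => hpr0 k)
    simpa [successProb, incidence, hi] using hprefix
  · have hinc : incidence S i = 0 := if_neg hi
    have hsucc : successProb pr S i = 0 := if_neg hi
    calc successProb pr S j ≤ pr j * incidence S j := successProb_le_mul_incidence hpr0 hpr1 S j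
      _ ≤ pr j := mul_le_of_le_one_right (hpr0 j) (by unfold incidence; split_ifs <;> norm_num)
      _ = pr j * (successProb pr S i + 1 - incidence S i) := by rw [hinc, hsucc]; ring

lemma le_successProb [WellFoundedLT ι] (hpr0 : ∀ j, 0 ≤ pr j) (S : Finset ι) {P : ι → ℝ}
    (hP1 : ∀ j, P j ≤ pr j * incidence S j)
    (hP2 : ∀ i j, i < j → P j ≤ pr j * (P i + 1 - incidence S i)) (j : ι) :
    P j ≤ successProb pr S j := by
  induction j using WellFoundedLT.induction with
  | _ j ih =>
  by_cases hj : j ∈ S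
  · simp only [successProb, hj, if_true, prod_filter_le_eq_mul_prod_filter_lt pr hj]
    by_cases hne : (S.filter (· < j)).Nonempty
    · set i := (S.filter (· < j)).max' hne
      obtain ⟨hiS, hij⟩ : i ∈ S ∧ i < j := mem_filter.mp (max'_mem _ hne)
      have hbelow : S.filter (· ≤ i) = S.filter (· < j) := by
        ext k
        simp only [mem_filter]
        exact ⟨fun ⟨hk, hki⟩ => ⟨hk, hki.trans_lt hij⟩,
          fun ⟨hk, hkj⟩ => ⟨hk, le_max' _ k (mem_filter.mpr ⟨hk, hkj⟩)⟩⟩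
      have hPi : P i ≤ ∏ k ∈ S.filter (· < j), pr k := by
        simpa [successProb, hiS, hbelow] using ih i hij
      calc P j ≤ pr j * P i := by simpa [incidence, hiS] using hP2 i j hij
        _ ≤ pr j * ∏ k ∈ S.filter (· < j), pr k := mul_le_mul_of_nonneg_left hPi (hpr0 j)
    · simpa [not_nonempty_iff_eq_empty.mp hne, incidence, hj] using hP1 j
  · simpa [successProb, incidence, hj] using hP1 j

lemma eq_incidence_of_binary [Fintype ι] {x : ι → ℝ} (hx : ∀ j, x j = 0 ∨ x j = 1) :
    x = incidence (univ.filter (x · = 1)) := by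
  funext j
  rcases hx j with h | h <;> simp [incidence, h]

end SuccessProb

lemma sum_successProb_sub_incidence {n : ℕ} (pr r c : Fin n → ℝ) (S : Finset (Fin n)) :
    ∑ j, (r j * successProb pr S j - c j * incidence S j) = netz pr r c S := by
  have hterm : ∀ j, r j * successProb pr S j - c j * incidence S j
      = if j ∈ S then r j * ∏ i ∈ S.filter (· ≤ j), pr i - c j else 0 := by
    intro j
    by_cases hj : j ∈ S <;> simp [successProb, incidence, hj]
  simp only [hterm, sum_ite_mem, univ_inter, sum_sub_distrib]
  rfl

theorem milp_formulation_correct_general (n : ℕ) (pr r c : Fin n → ℝ)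
    (hpr : ∀ j, 0 ≤ pr j ∧ pr j < 1) (hr : ∀ j, 0 ≤ r j) :
    IsGreatest
      {v : ℝ | ∃ x P : Fin n → ℝ,
        (∀ j, x j = 0 ∨ x j = 1) ∧
        (∀ j, 0 ≤ P j) ∧
        (∀ j, P j ≤ pr j * x j) ∧
        (∀ i j : Fin n, i < j → P j ≤ pr j * (P i + 1 - x i)) ∧
        v = ∑ j, (r j * P j - c j * x j)}
      ((Finset.univ : Finset (Fin n)).powerset.sup' (Finset.powerset_nonempty _)
        (netz pr r c)) := by
  have hpr0 : ∀ j, 0 ≤ pr j := fun j => (hpr j).1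
  have hpr1 : ∀ j, pr j ≤ 1 := fun j => (hpr j).2.le
  constructor
  · obtain ⟨S, -, hS⟩ := exists_mem_eq_sup' (powerset_nonempty univ) (netz pr r c)
    refine ⟨incidence S, successProb pr S, fun j => ?_, successProb_nonneg hpr0 S,
      successProb_le_mul_incidence hpr0 hpr1 S, fun i j => successProb_le_of_lt hpr0 hpr1 S,
      by rw [hS, sum_successProb_sub_incidence]⟩
    by_cases hj : j ∈ S <;> simp [incidence, hj]
  · rintro v ⟨x, P, hx, -, hP1, hP2, rfl⟩
    obtain ⟨S, rfl⟩ : ∃ S, x = incidence S := ⟨_, eq_incidence_of_binary hx⟩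
    calc ∑ j, (r j * P j - c j * incidence S j)
        ≤ ∑ j, (r j * successProb pr S j - c j * incidence S j) := by
          gcongr with j
          exacts [hr j, le_successProb hpr0 S hP1 hP2 j]
      _ = netz pr r c S := sum_successProb_sub_incidence pr r c S
      _ ≤ _ := le_sup' (netz pr r c) (mem_powerset.mpr (subset_univ S))

/-- The compact MILP formulation of UJSSP: the maximum of
`Σ_j (r_j P_j − c_j x_j)` over `x ∈ {0,1}^n`, `P ≥ 0`, `P_j ≤ π_j x_j`, and
`P_j ≤ π_j (P_i + 1 − x_i)` for `i < j`, is attained and equals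
`max_{S ⊆ {1,…,n}} z(S)`. -/
theorem milp_formulation_correct (n : ℕ) (pr r c : Fin n → ℝ)
    (hpr : ∀ j, 0 ≤ pr j ∧ pr j < 1) (hr : ∀ j, 0 ≤ r j) (hc : ∀ j, 0 ≤ c j)
    (hZ : ∀ i j : Fin n, i ≤ j →
      pr j * r j / (1 - pr j) ≤ pr i * r i / (1 - pr i)) :
    IsGreatest
      {v : ℝ | ∃ x P : Fin n → ℝ,
        (∀ j, x j = 0 ∨ x j = 1) ∧
        (∀ j, 0 ≤ P j) ∧
        (∀ j, P j ≤ pr j * x j) ∧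
        (∀ i j : Fin n, i < j → P j ≤ pr j * (P i + 1 - x i)) ∧
        v = ∑ j, (r j * P j - c j * x j)}
      ((Finset.univ : Finset (Fin n)).powerset.sup' (Finset.powerset_nonempty _)
        (netz pr r c)) :=
  milp_formulation_correct_general n pr r c hpr hr
end

section
/- The expected reward function is submodular: if jobs are indexed in non-increasing Z order, then for all subsets S ⊆ T ⊆ {1,…,n} and every j ∉ T, R(S ∪ {j}) − R(S) ≥ R(T ∪ {j}) − R(T). -/
/-!
Write `P(U) = ∏_{i∈U} π_i` and `Z_j = π_j r_j / (1 - π_j)`. If every job of `L` precedes every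
job of `H`, then `R(L ∪ H) = R(L) + P(L) R(H)`. Splitting `S` at `j ∉ S` into the jobs before and
after `j` gives the marginal gain
`R(S ∪ {j}) - R(S) = P(S_{<j}) (π_j r_j - (1 - π_j) R(S_{>j}))`.
Since `π_k r_k = Z_k (1 - π_k)`, the reward of a set `U` telescopes against `Z`:
`R(U) ≤ (max_{k∈U} Z_k) (1 - P(U))`, so the second factor is at least `π_j r_j P(S_{>j}) ≥ 0`.
Thus `R` is monotone, and as `S` grows both factors of the marginal gain shrink: the first is a
product over more numbers in `[0, 1]`, the second subtracts the reward of a larger set.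
-/

section

variable {n : ℕ} {pr r : Fin n → ℝ}

theorem Rexp_union_of_lt {L H : Finset (Fin n)} (hLH : ∀ i ∈ L, ∀ k ∈ H, i < k) :
    Rexp pr r (L ∪ H) = Rexp pr r L + (∏ i ∈ L, pr i) * Rexp pr r H := by
  have hdisj : Disjoint L H :=
    Finset.disjoint_left.mpr fun i hiL hiH => lt_irrefl i (hLH i hiL i hiH)
  unfold Rexp
  rw [Finset.sum_union hdisj, Finset.mul_sum]
  congr 1
  · refine Finset.sum_congr rfl fun k hk => ?_
    have hH : H.filter (· ≤ k) = ∅ :=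
      Finset.filter_false_of_mem fun i hi => not_le.mpr (hLH k hk i hi)
    rw [Finset.filter_union, hH, Finset.union_empty]
  · refine Finset.sum_congr rfl fun k hk => ?_
    have hL : L.filter (· ≤ k) = L :=
      Finset.filter_true_of_mem fun i hi => (hLH i hi k hk).le
    rw [Finset.filter_union, hL,
      Finset.prod_union (hdisj.mono_right (Finset.filter_subset _ _))]
    ring

theorem Rexp_insert_of_lt {j : Fin n} {H : Finset (Fin n)} (hH : ∀ k ∈ H, j < k) :
    Rexp pr r (insert j H) = pr j * (r j + Rexp pr r H) := by
  rw [Finset.insert_eq, Rexp_union_of_lt (by simpa using hH)]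
  simp [Rexp, Finset.filter_singleton]
  ring

theorem Rexp_le_mul_one_sub_prod {z : ℝ} {U : Finset (Fin n)} (hpr : ∀ k ∈ U, 0 ≤ pr k)
    (hz : ∀ k ∈ U, pr k * r k ≤ z * (1 - pr k)) :
    Rexp pr r U ≤ z * (1 - ∏ k ∈ U, pr k) := by
  induction U using Finset.induction_on_min with
  | empty => simp [Rexp]
  | insert m U hm ih =>
    have hmU : m ∉ U := fun h => lt_irrefl m (hm m h)
    have hRU := ih (fun k hk => hpr k (Finset.mem_insert_of_mem hk))
      (fun k hk => hz k (Finset.mem_insert_of_mem hk))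
    have hpm := hpr m (Finset.mem_insert_self m U)
    have hzm := hz m (Finset.mem_insert_self m U)
    rw [Rexp_insert_of_lt hm, Finset.prod_insert hmU]
    linarith [mul_le_mul_of_nonneg_left hRU hpm]

theorem Rexp_insert_sub_Rexp {S : Finset (Fin n)} {j : Fin n} (hj : j ∉ S) :
    Rexp pr r (insert j S) - Rexp pr r S =
      (∏ i ∈ S.filter (· < j), pr i) *
        (pr j * r j - (1 - pr j) * Rexp pr r (S.filter (j < ·))) := by
  have hsplit : S = S.filter (· < j) ∪ S.filter (j < ·) := by
    ext i
    simp only [Finset.mem_union, Finset.mem_filter]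
    constructor
    · intro hi
      rcases lt_trichotomy i j with h | rfl | h
      exacts [.inl ⟨hi, h⟩, absurd hi hj, .inr ⟨hi, h⟩]
    · rintro (⟨hi, -⟩ | ⟨hi, -⟩) <;> exact hi
  have hLH : ∀ i ∈ S.filter (· < j), ∀ k ∈ S.filter (j < ·), i < k := fun i hi k hk =>
    (Finset.mem_filter.mp hi).2.trans (Finset.mem_filter.mp hk).2
  have hLjH : ∀ i ∈ S.filter (· < j), ∀ k ∈ insert j (S.filter (j < ·)), i < k := by
    intro i hi k hk
    rcases Finset.mem_insert.mp hk with rfl | hk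
    exacts [(Finset.mem_filter.mp hi).2, hLH i hi k hk]
  have hins : insert j S = S.filter (· < j) ∪ insert j (S.filter (j < ·)) := by
    rw [Finset.union_insert, ← hsplit]
  have hS : Rexp pr r S = Rexp pr r (S.filter (· < j)) +
      (∏ i ∈ S.filter (· < j), pr i) * Rexp pr r (S.filter (j < ·)) := by
    conv_lhs => rw [hsplit]
    exact Rexp_union_of_lt hLH
  rw [hins, Rexp_union_of_lt hLjH,
    Rexp_insert_of_lt fun k hk => (Finset.mem_filter.mp hk).2, hS]
  ring

theorem one_sub_mul_Rexp_filter_gt_le (hpr : ∀ j, 0 ≤ pr j ∧ pr j < 1) (hr : ∀ j, 0 ≤ r j)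
    (hZ : Antitone fun j => pr j * r j / (1 - pr j)) (S : Finset (Fin n)) (j : Fin n) :
    (1 - pr j) * Rexp pr r (S.filter (j < ·)) ≤ pr j * r j := by
  have h1j : 0 < 1 - pr j := sub_pos.mpr (hpr j).2
  have hbound : Rexp pr r (S.filter (j < ·)) ≤
      pr j * r j / (1 - pr j) * (1 - ∏ k ∈ S.filter (j < ·), pr k) :=
    Rexp_le_mul_one_sub_prod (fun k _ => (hpr k).1) fun k hk =>
      (div_le_iff₀ (sub_pos.mpr (hpr k).2)).mp (hZ (Finset.mem_filter.mp hk).2.le)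
  have hP : 0 ≤ ∏ k ∈ S.filter (j < ·), pr k := Finset.prod_nonneg fun k _ => (hpr k).1
  calc (1 - pr j) * Rexp pr r (S.filter (j < ·))
      ≤ (1 - pr j) * (pr j * r j / (1 - pr j) * (1 - ∏ k ∈ S.filter (j < ·), pr k)) := by
        gcongr
    _ = pr j * r j * (1 - ∏ k ∈ S.filter (j < ·), pr k) := by field_simp
    _ ≤ pr j * r j := by linarith [mul_nonneg (mul_nonneg (hpr j).1 (hr j)) hP]

theorem Rexp_monotone (hpr : ∀ j, 0 ≤ pr j ∧ pr j < 1) (hr : ∀ j, 0 ≤ r j)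
    (hZ : Antitone fun j => pr j * r j / (1 - pr j)) : Monotone (Rexp pr r) :=
  Finset.monotone_iff_forall_le_insert.mpr fun S j hj => by
    rw [← sub_nonneg, Rexp_insert_sub_Rexp hj]
    exact mul_nonneg (Finset.prod_nonneg fun i _ => (hpr i).1)
      (sub_nonneg.mpr (one_sub_mul_Rexp_filter_gt_le hpr hr hZ S j))

end

/-- The expected reward function is submodular: for `S ⊆ T` and `j ∉ T`,
`R(S ∪ {j}) − R(S) ≥ R(T ∪ {j}) − R(T)`. -/
theorem Rexp_submodular (n : ℕ) (pr r : Fin n → ℝ)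
    (hpr : ∀ j, 0 ≤ pr j ∧ pr j < 1) (hr : ∀ j, 0 ≤ r j)
    (hZ : ∀ i j : Fin n, i ≤ j →
      pr j * r j / (1 - pr j) ≤ pr i * r i / (1 - pr i))
    (S T : Finset (Fin n)) (hST : S ⊆ T) (j : Fin n) (hj : j ∉ T) :
    Rexp pr r (insert j T) - Rexp pr r T ≤ Rexp pr r (insert j S) - Rexp pr r S := by
  rw [Rexp_insert_sub_Rexp hj, Rexp_insert_sub_Rexp fun h => hj (hST h)]
  have hprefix : ∏ i ∈ T.filter (· < j), pr i ≤ ∏ i ∈ S.filter (· < j), pr i :=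
    Finset.prod_le_prod_of_subset_of_le_one (Finset.filter_subset_filter _ hST)
      (fun i _ => (hpr i).1) fun i _ _ => (hpr i).2.le
  have htail : Rexp pr r (S.filter (j < ·)) ≤ Rexp pr r (T.filter (j < ·)) :=
    Rexp_monotone hpr hr hZ (Finset.filter_subset_filter _ hST)
  have h1j : 0 ≤ 1 - pr j := sub_nonneg.mpr (hpr j).2.le
  exact mul_le_mul hprefix (by gcongr)
    (sub_nonneg.mpr (one_sub_mul_Rexp_filter_gt_le hpr hr hZ T j))
    (Finset.prod_nonneg fun i _ => (hpr i).1)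
end

section
/- The sequencing problem UJSP is a special case of maximization over the polymatroid associated with f(S) = 1 − ∏_{j∈S} π_j: if jobs are indexed in non-increasing Z order, then the vector x* with x*_j = (∏_{i<j} π_i)(1 − π_j) satisfies Σ_{j∈S} x*_j ≤ 1 − ∏_{j∈S} π_j for every S ⊆ {1,…,n}, and for every x ∈ ℝ^n with x_j ≥ 0 for all j and Σ_{j∈S} x_j ≤ 1 − ∏_{j∈S} π_j for every S ⊆ {1,…,n}, one has Σ_{j=1}^n Z_j x_j ≤ Σ_{j=1}^n Z_j x*_j = Σ_{j=1}^n r_j ∏_{i≤j} π_i = R({1,…,n}). -/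
namespace Finset

variable {α R : Type*} [LinearOrder α]

theorem sum_prod_filter_lt_mul_one_sub [CommRing R] (s : Finset α) (p : α → R) :
    ∑ j ∈ s, (∏ i ∈ s with i < j, p i) * (1 - p j) = 1 - ∏ j ∈ s, p j := by
  induction s using Finset.induction_on_max with
  | empty => simp
  | insert a s ha ih =>
    have has : a ∉ s := fun h => lt_irrefl a (ha a h)
    have h_a : {i ∈ insert a s | i < a} = s := by
      rw [filter_insert, if_neg (lt_irrefl a)]
      exact filter_true_of_mem ha
    have h_s : ∀ j ∈ s, {i ∈ insert a s | i < j} = {i ∈ s | i < j} := fun j hj => by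
      rw [filter_insert, if_neg (lt_asymm (ha j hj))]
    rw [sum_insert has, prod_insert has, h_a, sum_congr rfl fun j hj => by rw [h_s j hj], ih]
    ring

section LocallyFinite

variable [LocallyFiniteOrderBot α]

theorem sum_prod_Iio_mul_one_sub_Iic [CommRing R] (p : α → R) (k : α) :
    ∑ j ∈ Iic k, (∏ i ∈ Iio j, p i) * (1 - p j) = 1 - ∏ j ∈ Iic k, p j := by
  rw [← sum_prod_filter_lt_mul_one_sub]
  refine sum_congr rfl fun j hj => ?_
  congr 2
  ext i
  simp only [mem_filter, mem_Iio, mem_Iic] at hj ⊢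
  exact ⟨fun hij => ⟨(hij.trans_le hj).le, hij⟩, And.right⟩

theorem sum_prod_Iio_mul_one_sub_le [CommRing R] [PartialOrder R] [IsOrderedRing R]
    {p : α → R} (hp0 : ∀ i, 0 ≤ p i) (hp1 : ∀ i, p i ≤ 1) (s : Finset α) :
    ∑ j ∈ s, (∏ i ∈ Iio j, p i) * (1 - p j) ≤ 1 - ∏ j ∈ s, p j := by
  rw [← sum_prod_filter_lt_mul_one_sub]
  refine sum_le_sum fun j _ => mul_le_mul_of_nonneg_right ?_ (sub_nonneg.2 (hp1 j))
  exact prod_anti_set_of_le_one hp0 hp1 fun i hi => mem_Iio.2 (mem_filter.1 hi).2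

end LocallyFinite

theorem sum_mul_nonneg_of_antitoneOn_of_prefix_sum_nonneg [Ring R] [PartialOrder R]
    [IsOrderedRing R] {s : Finset α} {f g : α → R} (hf : AntitoneOn f s)
    (hf0 : ∀ j ∈ s, 0 ≤ f j) (hg : ∀ k ∈ s, 0 ≤ ∑ j ∈ s with j ≤ k, g j) :
    0 ≤ ∑ j ∈ s, f j * g j := by
  induction s using Finset.induction_on_max generalizing f with
  | empty => simp
  | insert a s ha ih =>
    have has : a ∉ s := fun h => lt_irrefl a (ha a h)
    -- peel off `f a` times the full sum; what remains has weights `f j - f a ≥ 0` on `s`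
    have h_split : ∑ j ∈ insert a s, f j * g j
        = f a * ∑ j ∈ insert a s, g j + ∑ j ∈ s, (f j - f a) * g j := by
      simp only [sum_insert has, mul_add, mul_sum, sub_mul, sum_sub_distrib]
      abel
    have h_pre : ∀ k ∈ s, {j ∈ insert a s | j ≤ k} = {j ∈ s | j ≤ k} := fun k hk => by
      rw [filter_insert, if_neg (ha k hk).not_ge]
    have h_full : {j ∈ insert a s | j ≤ a} = insert a s :=
      filter_true_of_mem fun j hj => (mem_insert.1 hj).elim le_of_eq fun h => (ha j h).le
    rw [h_split]
    refine add_nonneg (mul_nonneg (hf0 a (mem_insert_self a s)) ?_) (ih ?_ ?_ ?_)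
    · simpa only [h_full] using hg a (mem_insert_self a s)
    · exact fun i hi j hj hij => sub_le_sub_right
        (hf (mem_insert_of_mem hi) (mem_insert_of_mem hj) hij) _
    · exact fun j hj => sub_nonneg.2
        (hf (mem_insert_of_mem hj) (mem_insert_self a s) (ha j hj).le)
    · exact fun k hk => by simpa only [h_pre k hk] using hg k (mem_insert_of_mem hk)

theorem sum_mul_le_sum_mul_of_antitoneOn_of_prefix_sum_le [Ring R] [PartialOrder R]
    [IsOrderedRing R] {s : Finset α} {f x y : α → R} (hf : AntitoneOn f s)
    (hf0 : ∀ j ∈ s, 0 ≤ f j)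
    (hxy : ∀ k ∈ s, ∑ j ∈ s with j ≤ k, x j ≤ ∑ j ∈ s with j ≤ k, y j) :
    ∑ j ∈ s, f j * x j ≤ ∑ j ∈ s, f j * y j := by
  have := sum_mul_nonneg_of_antitoneOn_of_prefix_sum_nonneg hf hf0 (g := y - x)
    fun k hk => by simpa only [Pi.sub_apply, sum_sub_distrib, sub_nonneg] using hxy k hk
  simpa only [Pi.sub_apply, mul_sub, sum_sub_distrib, sub_nonneg] using this

end Finset

open Finset

/-- UJSP as maximization over the polymatroid of `f(S) = 1 − ∏_{j∈S} π_j`: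
the vector `x*_j = (∏_{i<j} π_i)(1 − π_j)` is feasible, it maximizes
`Σ_j Z_j x_j` over the polymatroid, and its objective value equals
`Σ_j r_j ∏_{i≤j} π_i = R({1,…,n})`. -/
theorem ujsp_polymatroid (n : ℕ) (pr r : Fin n → ℝ)
    (hpr : ∀ j, 0 ≤ pr j ∧ pr j < 1) (hr : ∀ j, 0 ≤ r j)
    (hZ : ∀ i j : Fin n, i ≤ j →
      pr j * r j / (1 - pr j) ≤ pr i * r i / (1 - pr i)) :
    (∀ S : Finset (Fin n),
        ∑ j ∈ S, (∏ i ∈ Finset.Iio j, pr i) * (1 - pr j) ≤ 1 - ∏ j ∈ S, pr j) ∧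
    (∀ x : Fin n → ℝ, (∀ j, 0 ≤ x j) →
        (∀ S : Finset (Fin n), ∑ j ∈ S, x j ≤ 1 - ∏ j ∈ S, pr j) →
        ∑ j, (pr j * r j / (1 - pr j)) * x j ≤
          ∑ j, (pr j * r j / (1 - pr j)) * ((∏ i ∈ Finset.Iio j, pr i) * (1 - pr j))) ∧
    (∑ j, (pr j * r j / (1 - pr j)) * ((∏ i ∈ Finset.Iio j, pr i) * (1 - pr j)) =
        ∑ j, r j * ∏ i ∈ Finset.Iic j, pr i) ∧
    (∑ j, r j * ∏ i ∈ Finset.Iic j, pr i = Rexp pr r Finset.univ) := by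
  have h_one_sub_pos : ∀ j, 0 < 1 - pr j := fun j => sub_pos.2 (hpr j).2
  refine ⟨sum_prod_Iio_mul_one_sub_le (fun j => (hpr j).1) (fun j => (hpr j).2.le),
    fun x _ hx => ?_, sum_congr rfl fun j _ => ?_, ?_⟩
  · refine sum_mul_le_sum_mul_of_antitoneOn_of_prefix_sum_le (fun i _ j _ hij => hZ i j hij)
      (fun j _ => div_nonneg (mul_nonneg (hpr j).1 (hr j)) (h_one_sub_pos j).le) fun k _ => ?_
    simpa only [filter_ge_eq_Iic, sum_prod_Iio_mul_one_sub_Iic] using hx (Iic k)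
  · rw [← prod_Iio_mul_eq_prod_Iic]
    field_simp [(h_one_sub_pos j).ne']
  · simp only [Rexp, filter_ge_eq_Iic]
end

section
/- If all jobs in a finite set S have the same Z-index, i.e., there is a constant C ≥ 0 with π_j r_j = C(1 − π_j) for every j ∈ S, then the expected reward is the same for every ordering of S and equals R(S,σ) = C·(1 − ∏_{j∈S} π_j) for every ordering σ of the elements of S. -/
open Finset

theorem Fin.sum_prod_Iio_sub_prod_Iic {R : Type*} [CommRing R] :
    ∀ {m : ℕ} (p : Fin m → R), ∑ k, (∏ i < k, p i - ∏ i ≤ k, p i) = 1 - ∏ i, p i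
  | 0, _ => by simp
  | n + 1, p => by
    rw [Fin.sum_univ_castSucc, ← Fin.top_eq_last, Iic_top, Fin.prod_univ_castSucc]
    simp only [Fin.prod_Iio_castSucc, Fin.prod_Iic_castSucc,
      Fin.sum_prod_Iio_sub_prod_Iic (fun i : Fin n ↦ p i.castSucc), Fin.top_eq_last,
      Fin.Iio_last_eq_map, prod_map, Fin.coe_castSuccEmb]
    ring


theorem mul_prod_Iic_eq_mul_sub_of_mul_eq {α R : Type*} [CommRing R] [PartialOrder α]
    [LocallyFiniteOrderBot α] {p g : α → R} {C : R} (k : α) (hk : p k * g k = C * (1 - p k)) :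
    g k * ∏ i ≤ k, p i = C * (∏ i < k, p i - ∏ i ≤ k, p i) := by
  rw [← prod_Iio_mul_eq_prod_Iic]
  linear_combination (∏ i < k, p i) * hk


theorem Fin.sum_mul_prod_Iic_of_mul_eq {R : Type*} [CommRing R] {m : ℕ} {p g : Fin m → R} {C : R}
    (h : ∀ k, p k * g k = C * (1 - p k)) :
    ∑ k, g k * ∏ i ≤ k, p i = C * (1 - ∏ i, p i) := by
  simp only [mul_prod_Iic_eq_mul_sub_of_mul_eq _ (h _), ← mul_sum, Fin.sum_prod_Iio_sub_prod_Iic]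


theorem equal_Z_reward_general {m : ℕ} (pr r : Fin m → ℝ)
    (C : ℝ) (hZ : ∀ j, pr j * r j = C * (1 - pr j))
    (σ : Equiv.Perm (Fin m)) :
    expReward pr r σ = C * (1 - ∏ j, pr j) := by
  rw [expReward, Fin.sum_mul_prod_Iic_of_mul_eq (fun k ↦ hZ (σ k)), Equiv.prod_comp σ pr]

/-- If all jobs have the same Z-index, i.e. `π_j r_j = C (1 − π_j)` for every job
with a constant `C ≥ 0`, then the expected reward is the same for every ordering,
namely `C · (1 − ∏_j π_j)`. -/
theorem equal_Z_reward {m : ℕ} (pr r : Fin m → ℝ)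
    (hpr : ∀ j, 0 ≤ pr j ∧ pr j < 1) (hr : ∀ j, 0 ≤ r j)
    (C : ℝ) (hC : 0 ≤ C) (hZ : ∀ j, pr j * r j = C * (1 - pr j))
    (σ : Equiv.Perm (Fin m)) :
    expReward pr r σ = C * (1 - ∏ j, pr j) :=
  equal_Z_reward_general pr r C hZ σ
end

section
/- Let a_1,…,a_n be integers with a_j ≥ 2 for all j, and let W = ∏_{j=1}^n a_j. Then there exists a subset S ⊆ {1,…,n} such that Σ_{j∈S} ln a_j + √W · ∏_{j∈S} (1/a_j) ≤ 1 + ln √W if and only if there exists a subset S ⊆ {1,…,n} with ∏_{j∈S} a_j = ∏_{j∉S} a_j (equivalently, ∏_{j∈S} a_j = √W). Moreover, when such an S exists the inequality holds with equality. -/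
/-! Writing `P = ∏_{j∈S} a_j`, the left-hand side is `log P + √W / P`, and `log t ≤ t - 1`
at `t = √W / P` gives `log P + √W / P ≥ 1 + log √W`, with equality exactly when `P = √W`.
Since `P · ∏_{j∉S} a_j = W`, the condition `P = √W` says that `S` splits the product evenly. -/

open Finset Real

theorem Real.log_add_div_le_one_add_log_iff {x y : ℝ} (hx : 0 < x) (hy : 0 < y) :
    log x + y / x ≤ 1 + log y ↔ x = y := by
  refine ⟨fun h => ?_, fun h => le_of_eq (by rw [h, div_self hy.ne']; ring)⟩
  by_contra hxy
  have hne : y / x ≠ 1 := fun h1 => hxy ((div_eq_one_iff_eq hx.ne').mp h1).symm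
  have := log_lt_sub_one_of_pos (div_pos hy hx) hne
  rw [log_div hy.ne' hx.ne'] at this
  linarith

theorem Finset.prod_eq_prod_compl_iff_cast_eq_sqrt {ι : Type*} [Fintype ι] [DecidableEq ι]
    (a : ι → ℕ) (ha : ∀ j, a j ≠ 0) (S : Finset ι) :
    ∏ j ∈ S, a j = ∏ j ∈ Sᶜ, a j ↔ ((∏ j ∈ S, a j : ℕ) : ℝ) = √(∏ j, a j : ℕ) := by
  have hP : ∏ j ∈ S, a j ≠ 0 := prod_ne_zero_iff.mpr fun j _ => ha j
  rw [eq_comm (b := √_), sqrt_eq_iff_mul_self_eq_of_pos (by positivity),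
    ← prod_mul_prod_compl S]
  norm_cast
  exact (Nat.mul_right_inj hP).symm

/-- Core of the reduction from the Product Partition Problem to UJSSP: for
integers `a_j ≥ 2` with `W = ∏_j a_j`, there exists `S` with
`Σ_{j∈S} ln a_j + √W ∏_{j∈S} 1/a_j ≤ 1 + ln √W` iff there is a subset `S` with
`∏_{j∈S} a_j = ∏_{j∉S} a_j`; moreover when such an `S` exists the inequality
holds with equality. -/
theorem ppp_reduction (n : ℕ) (a : Fin n → ℕ) (ha : ∀ j, 2 ≤ a j)
    (W : ℕ) (hW : W = ∏ j, a j) :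
    ((∃ S : Finset (Fin n),
        ∑ j ∈ S, Real.log (a j) + Real.sqrt W * ∏ j ∈ S, (1 / (a j : ℝ)) ≤
          1 + Real.log (Real.sqrt W)) ↔
      ∃ S : Finset (Fin n), ∏ j ∈ S, a j = ∏ j ∈ Sᶜ, a j) ∧
    (∀ S : Finset (Fin n), ∏ j ∈ S, a j = ∏ j ∈ Sᶜ, a j →
      ∑ j ∈ S, Real.log (a j) + Real.sqrt W * ∏ j ∈ S, (1 / (a j : ℝ)) =
        1 + Real.log (Real.sqrt W)) := by
  subst hW
  have ha₀ : ∀ j, a j ≠ 0 := fun j => by have := ha j; omega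
  have hP (S : Finset (Fin n)) : 0 < ((∏ j ∈ S, a j : ℕ) : ℝ) :=
    Nat.cast_pos.mpr (prod_pos fun j _ => Nat.pos_of_ne_zero (ha₀ j))
  have hW : 0 < √(∏ j, a j : ℕ) := sqrt_pos.mpr (hP univ)
  have hobjective (S : Finset (Fin n)) :
      ∑ j ∈ S, log (a j) + √(∏ j, a j : ℕ) * ∏ j ∈ S, (1 / (a j : ℝ)) =
        log ((∏ j ∈ S, a j : ℕ) : ℝ) + √(∏ j, a j : ℕ) / ((∏ j ∈ S, a j : ℕ) : ℝ) := by
    push_cast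
    rw [log_prod fun j _ => by simp [ha₀], prod_div_distrib, prod_const_one, mul_one_div]
  have hkey (S : Finset (Fin n)) :
      ∑ j ∈ S, log (a j) + √(∏ j, a j : ℕ) * ∏ j ∈ S, (1 / (a j : ℝ)) ≤
          1 + log √(∏ j, a j : ℕ) ↔ ∏ j ∈ S, a j = ∏ j ∈ Sᶜ, a j := by
    rw [hobjective, log_add_div_le_one_add_log_iff (hP S) hW,
      prod_eq_prod_compl_iff_cast_eq_sqrt a ha₀]
  refine ⟨exists_congr hkey, fun S hS => ?_⟩
  rw [hobjective, (prod_eq_prod_compl_iff_cast_eq_sqrt a ha₀ S).mp hS, div_self hW.ne']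
  ring
end

section
/- Suppose all jobs have the same expected reward: π_j r_j = k for all j = 1,…,n, where k > 0, π_j ∈ (0,1), r_j > 0, and jobs are indexed so that π_1 ≥ π_2 ≥ ⋯ ≥ π_n (equivalently, by non-increasing Z-index). Let S = {j_1 < j_2 < ⋯ < j_m} be a nonempty subset with z(S) ≥ z(S') for every S' ⊆ {1,…,n}. Then: (1) if μ is the unique cost minimizer, i.e., c_μ < c_j for every j ≠ μ, then μ ∈ S; and (2) for every i ∈ {1,…,m−1}, if ν is the unique cost minimizer among indices larger than j_i, i.e., ν > j_i and c_ν < c_j for every j > j_i with j ≠ ν, then ν ∈ S. -/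
/-!
When `π_j r_j = k` for every job, `R(S) = k ∑_{j ∈ S} ∏_{i ∈ S, i < j} π_i`: the reward only sees
the probabilities of the jobs of `S` in their order, and is monotone in all of them except the
last one. If a cheap job `ν` were missing from an optimal `S`, exchange it for the first job `t`
of `S` after `ν` (or the last job of `S` if there is none). The jobs keep their relative order and
`π_t ≤ π_ν` whenever `t` is not last, so the reward does not drop while the cost strictly does.
-/

section Exchange

variable {n : ℕ}

def reachProb (pr : Fin n → ℝ) (S : Finset (Fin n)) (j : Fin n) : ℝ :=
  ∏ i ∈ S.filter (· < j), pr i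

theorem Rexp_eq_sum_mul_reachProb (pr r : Fin n → ℝ) (S : Finset (Fin n)) :
    Rexp pr r S = ∑ j ∈ S, pr j * r j * reachProb pr S j := by
  refine Finset.sum_congr rfl fun j hj => ?_
  have hfilter : S.filter (· ≤ j) = insert j (S.filter (· < j)) := by
    ext i
    simp only [Finset.mem_filter, Finset.mem_insert, le_iff_lt_or_eq]
    constructor
    · rintro ⟨hi, hij | rfl⟩ <;> tauto
    · rintro (rfl | ⟨hi, hij⟩) <;> tauto
  rw [hfilter, Finset.prod_insert (by simp), reachProb]
  ring

theorem Rexp_eq_mul_sum_reachProb (pr r : Fin n → ℝ) (k : ℝ) (hke : ∀ j, pr j * r j = k)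
    (S : Finset (Fin n)) :
    Rexp pr r S = k * ∑ j ∈ S, reachProb pr S j := by
  simp only [Rexp_eq_sum_mul_reachProb, hke, Finset.mul_sum]

theorem sum_reachProb_le_exchange (pr : Fin n → ℝ) (hpr : ∀ j, 0 ≤ pr j)
    {S : Finset (Fin n)} {t ν : Fin n} (ht : t ∈ S) (hν : ν ∉ S)
    (hsep : ∀ s ∈ S.erase t, s < ν ↔ s < t) (hπ : ∀ s ∈ S, t < s → pr t ≤ pr ν) :
    ∑ j ∈ S, reachProb pr S j ≤
      ∑ j ∈ insert ν (S.erase t), reachProb pr (insert ν (S.erase t)) j := by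
  set E := S.erase t
  have hνE : ν ∉ E := fun h => hν (Finset.mem_of_mem_erase h)
  have hSE : S = insert t E := (Finset.insert_erase ht).symm
  have hsep' : ∀ s ∈ E, ν < s ↔ t < s := fun s hs => by
    have hsν : s ≠ ν := fun h => hνE (h ▸ hs)
    have hst : s ≠ t := Finset.ne_of_mem_erase hs
    rw [← not_le, ← not_le, hsν.le_iff_lt, hst.le_iff_lt, hsep s hs]
  have hhead : reachProb pr S t = reachProb pr (insert ν E) ν := by
    rw [reachProb, reachProb, hSE, Finset.filter_insert, Finset.filter_insert,
      if_neg (lt_irrefl t), if_neg (lt_irrefl ν), Finset.filter_congr hsep]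
  have htail : ∀ j ∈ E, reachProb pr S j ≤ reachProb pr (insert ν E) j := fun j hj => by
    rw [reachProb, reachProb, hSE, Finset.filter_insert, Finset.filter_insert]
    by_cases htj : t < j
    · rw [if_pos htj, if_pos ((hsep' j hj).2 htj), Finset.prod_insert (by simp [E]),
        Finset.prod_insert (by simp [hνE])]
      exact mul_le_mul_of_nonneg_right (hπ j (Finset.mem_of_mem_erase hj) htj)
        (Finset.prod_nonneg fun i _ => hpr i)
    · rw [if_neg htj, if_neg (mt (hsep' j hj).1 htj)]
  calc ∑ j ∈ S, reachProb pr S j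
      = reachProb pr S t + ∑ j ∈ E, reachProb pr S j := (Finset.add_sum_erase _ _ ht).symm
    _ ≤ reachProb pr (insert ν E) ν + ∑ j ∈ E, reachProb pr (insert ν E) j :=
        hhead ▸ add_le_add_right (Finset.sum_le_sum htail) _
    _ = ∑ j ∈ insert ν E, reachProb pr (insert ν E) j := (Finset.sum_insert hνE).symm

theorem netz_lt_netz_exchange (pr r c : Fin n → ℝ) (k : ℝ) (hk : 0 ≤ k)
    (hpr : ∀ j, 0 ≤ pr j) (hke : ∀ j, pr j * r j = k)
    {S : Finset (Fin n)} {t ν : Fin n} (ht : t ∈ S) (hν : ν ∉ S)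
    (hsep : ∀ s ∈ S.erase t, s < ν ↔ s < t) (hπ : ∀ s ∈ S, t < s → pr t ≤ pr ν)
    (hcost : c ν < c t) :
    netz pr r c S < netz pr r c (insert ν (S.erase t)) := by
  have hreward : Rexp pr r S ≤ Rexp pr r (insert ν (S.erase t)) := by
    rw [Rexp_eq_mul_sum_reachProb pr r k hke, Rexp_eq_mul_sum_reachProb pr r k hke]
    exact mul_le_mul_of_nonneg_left (sum_reachProb_le_exchange pr hpr ht hν hsep hπ) hk
  have hcst : cst c (insert ν (S.erase t)) = cst c S - c t + c ν := by
    rw [cst, cst, Finset.sum_insert (fun h => hν (Finset.mem_of_mem_erase h)),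
      Finset.sum_erase_eq_sub ht]
    ring
  rw [netz, netz, hcst]
  linarith

theorem exists_exchange_partner {S : Finset (Fin n)} (hS : S.Nonempty) {ν : Fin n} (hν : ν ∉ S) :
    ∃ t ∈ S, (∀ s ∈ S.erase t, s < ν ↔ s < t) ∧ ((∃ s ∈ S, t < s) → ν < t) := by
  have hne : ∀ s ∈ S, s ≠ ν := fun s hs h => hν (h ▸ hs)
  by_cases hT : (S.filter (ν < ·)).Nonempty
  · obtain ⟨htS, hνt⟩ := Finset.mem_filter.mp ((S.filter (ν < ·)).min'_mem hT)
    refine ⟨_, htS, fun s hs => ⟨fun hsν => hsν.trans hνt, fun hst => ?_⟩, fun _ => hνt⟩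
    by_contra hsν
    have hνs : ν < s := lt_of_le_of_ne (not_lt.mp hsν) (hne s (Finset.mem_of_mem_erase hs)).symm
    exact hst.not_ge (Finset.min'_le _ s (Finset.mem_filter.mpr ⟨Finset.mem_of_mem_erase hs, hνs⟩))
  · have hbelow : ∀ s ∈ S, s < ν := fun s hs =>
      lt_of_le_of_ne (not_lt.mp fun hνs => hT ⟨s, Finset.mem_filter.mpr ⟨hs, hνs⟩⟩) (hne s hs)
    refine ⟨S.max' hS, S.max'_mem hS, fun s hs => ?_, fun ⟨s, hs, hlt⟩ => ?_⟩
    · obtain ⟨hs_ne, hs⟩ := Finset.mem_erase.mp hs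
      exact iff_of_true (hbelow s hs) (lt_of_le_of_ne (S.le_max' s hs) hs_ne)
    · exact absurd (S.le_max' s hs) hlt.not_ge

theorem mem_of_cost_lt_exchange_partner (pr r c : Fin n → ℝ) (k : ℝ) (hk : 0 ≤ k)
    (hpr : ∀ j, 0 ≤ pr j) (hke : ∀ j, pr j * r j = k)
    (hmono : ∀ i j : Fin n, i ≤ j → pr j ≤ pr i)
    {S : Finset (Fin n)} (hS : S.Nonempty)
    (hopt : ∀ S' : Finset (Fin n), netz pr r c S' ≤ netz pr r c S) {ν : Fin n}
    (hcheap : ∀ t ∈ S, (∀ s ∈ S.erase t, s < ν ↔ s < t) → ((∃ s ∈ S, t < s) → ν < t) →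
      t ≠ ν → c ν < c t) :
    ν ∈ S := by
  by_contra hν
  obtain ⟨t, ht, hsep, hafter⟩ := exists_exchange_partner hS hν
  have hπ : ∀ s ∈ S, t < s → pr t ≤ pr ν := fun s hs hts => hmono ν t (hafter ⟨s, hs, hts⟩).le
  exact (hopt _).not_gt (netz_lt_netz_exchange pr r c k hk hpr hke ht hν hsep hπ
    (hcheap t ht hsep hafter fun h => hν (h ▸ ht)))

end Exchange

theorem equal_expected_reward_structure_general (n : ℕ) (pr r c : Fin n → ℝ)
    (k : ℝ) (hk : 0 < k)
    (hpr : ∀ j, 0 < pr j ∧ pr j < 1)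
    (hke : ∀ j, pr j * r j = k)
    (hmono : ∀ i j : Fin n, i ≤ j → pr j ≤ pr i)
    (S : Finset (Fin n)) (hS : S.Nonempty)
    (hopt : ∀ S' : Finset (Fin n), netz pr r c S' ≤ netz pr r c S) :
    (∀ μ : Fin n, (∀ j : Fin n, j ≠ μ → c μ < c j) → μ ∈ S) ∧
    (∀ a ∈ S, (∃ b ∈ S, a < b) →
      ∀ ν : Fin n, a < ν → (∀ j : Fin n, a < j → j ≠ ν → c ν < c j) → ν ∈ S) := by
  have hmem := fun ν => mem_of_cost_lt_exchange_partner pr r c k hk.le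
    (fun j => (hpr j).1.le) hke hmono hS hopt (ν := ν)
  refine ⟨fun μ hμ => hmem μ fun t _ _ _ htμ => hμ t htμ, ?_⟩
  rintro a ha ⟨b, hb, hab⟩ ν haν hν
  refine hmem ν fun t ht hsep hafter htν => hν t ?_ htν
  have hat : a ≠ t := fun h => (hafter ⟨b, hb, h ▸ hab⟩).not_gt (h ▸ haν)
  exact (hsep a (Finset.mem_erase.mpr ⟨hat, ha⟩)).mp haν

/-- When all jobs have the same expected reward `π_j r_j = k > 0` and are indexed
by non-increasing probability, any optimal nonempty set `S` must contain the
unique overall cost minimizer, and, for every non-maximal element `a` of `S`, the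
unique cost minimizer among indices larger than `a`. -/
theorem equal_expected_reward_structure (n : ℕ) (pr r c : Fin n → ℝ)
    (k : ℝ) (hk : 0 < k)
    (hpr : ∀ j, 0 < pr j ∧ pr j < 1) (hr : ∀ j, 0 < r j) (hc : ∀ j, 0 ≤ c j)
    (hke : ∀ j, pr j * r j = k)
    (hmono : ∀ i j : Fin n, i ≤ j → pr j ≤ pr i)
    (S : Finset (Fin n)) (hS : S.Nonempty)
    (hopt : ∀ S' : Finset (Fin n), netz pr r c S' ≤ netz pr r c S) :
    (∀ μ : Fin n, (∀ j : Fin n, j ≠ μ → c μ < c j) → μ ∈ S) ∧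
    (∀ a ∈ S, (∃ b ∈ S, a < b) →
      ∀ ν : Fin n, a < ν → (∀ j : Fin n, a < j → j ≠ ν → c ν < c j) → ν ∈ S) :=
  equal_expected_reward_structure_general n pr r c k hk hpr hke hmono S hS hopt
end

section
/- Forward optimality condition: let S* ⊆ {1,…,n} satisfy z(S*) ≥ z(S) for every S ⊆ {1,…,n}. For T ⊆ {1,…,n} and r ∈ ℝ define F(T, r) = R(T) − c(T) + (∏_{i∈T} π_i)·r. Then for every j ∈ {0,1,…,n} and every T ⊆ {1,…,j}, F(S* ∩ {1,…,j}, R(S* ∩ {j+1,…,n})) ≥ F(T, R(S* ∩ {j+1,…,n})). -/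
/-- Forward parameterized profit function
`F(T, r) = R(T) − c(T) + (∏_{i∈T} π_i)·r`. -/
def Ffun {n : ℕ} (pr r c : Fin n → ℝ) (T : Finset (Fin n)) (x : ℝ) : ℝ :=
  Rexp pr r T - cst c T + (∏ i ∈ T, pr i) * x

/-! Cutting an optimal sequence `S*` at `j` writes `z(S*) = F(S*_{≤j}, R(S*_{>j})) − c(S*_{>j})`,
since every job after the cut is reached only if all jobs before it succeed. Replacing the head
`S*_{≤j}` by any `T ⊆ {1,…,j}` gives the feasible set `T ∪ S*_{>j}` with
`z = F(T, R(S*_{>j})) − c(S*_{>j})`, and optimality of `S*` compares the two. -/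

section Concatenation

lemma Finset.disjoint_of_forall_lt {α : Type*} [Preorder α] {A B : Finset α}
    (h : ∀ a ∈ A, ∀ b ∈ B, a < b) : Disjoint A B :=
  Finset.disjoint_left.mpr fun x hxA hxB => lt_irrefl x (h x hxA x hxB)

variable {n : ℕ} {A B : Finset (Fin n)}

lemma Rexp_union_of_forall_lt (pr r : Fin n → ℝ) (h : ∀ a ∈ A, ∀ b ∈ B, a < b) :
    Rexp pr r (A ∪ B) = Rexp pr r A + (∏ i ∈ A, pr i) * Rexp pr r B := by
  have hdisj := Finset.disjoint_of_forall_lt h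
  unfold Rexp
  rw [Finset.sum_union hdisj, Finset.mul_sum]
  congr 1
  · refine Finset.sum_congr rfl fun a ha => ?_
    have hB : B.filter (· ≤ a) = ∅ :=
      Finset.filter_eq_empty_iff.mpr fun b hb => not_le_of_gt (h a ha b hb)
    rw [Finset.filter_union, hB, Finset.union_empty]
  · refine Finset.sum_congr rfl fun b hb => ?_
    have hA : A.filter (· ≤ b) = A :=
      Finset.filter_eq_self.mpr fun a ha => (h a ha b hb).le
    rw [Finset.filter_union, hA,
      Finset.prod_union (hdisj.mono_right (Finset.filter_subset _ B))]
    ring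

lemma netz_union_of_forall_lt (pr r c : Fin n → ℝ) (h : ∀ a ∈ A, ∀ b ∈ B, a < b) :
    netz pr r c (A ∪ B) = Ffun pr r c A (Rexp pr r B) - cst c B := by
  rw [netz, Ffun, Rexp_union_of_forall_lt pr r h, cst,
    Finset.sum_union (Finset.disjoint_of_forall_lt h), cst, cst]
  ring

end Concatenation

lemma Finset.filter_lt_union_filter_le {α β : Type*} [DecidableEq α] [LinearOrder β]
    (S : Finset α) (f : α → β) (j : β) :
    S.filter (fun i => f i < j) ∪ S.filter (fun i => j ≤ f i) = S := by
  simpa only [not_lt] using Finset.filter_union_filter_not_eq (fun i => f i < j) S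

/-- Jobs are numbered `1,…,n`, job `t` being the index `i : Fin n` with `i.val + 1 = t`,
so `{1,…,j}` is `{i : i.val < j}`. -/
theorem forward_optimality_general (n : ℕ) (pr r c : Fin n → ℝ)
    (Sstar : Finset (Fin n))
    (hopt : ∀ S : Finset (Fin n), netz pr r c S ≤ netz pr r c Sstar)
    (j : ℕ)
    (T : Finset (Fin n)) (hT : ∀ i ∈ T, i.val < j) :
    Ffun pr r c T (Rexp pr r (Sstar.filter (fun i => j ≤ i.val))) ≤
      Ffun pr r c (Sstar.filter (fun i => i.val < j))
        (Rexp pr r (Sstar.filter (fun i => j ≤ i.val))) := by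
  have hhead : ∀ a ∈ Sstar.filter (fun i => i.val < j),
      ∀ b ∈ Sstar.filter (fun i => j ≤ i.val), a < b := fun a ha b hb =>
    Fin.lt_def.mpr ((Finset.mem_filter.mp ha).2.trans_le (Finset.mem_filter.mp hb).2)
  have hT' : ∀ a ∈ T, ∀ b ∈ Sstar.filter (fun i => j ≤ i.val), a < b := fun a ha b hb =>
    Fin.lt_def.mpr ((hT a ha).trans_le (Finset.mem_filter.mp hb).2)
  have key := hopt (T ∪ Sstar.filter (fun i => j ≤ i.val))
  rw [netz_union_of_forall_lt pr r c hT', ← Finset.filter_lt_union_filter_le Sstar Fin.val j,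
    netz_union_of_forall_lt pr r c hhead, Finset.filter_lt_union_filter_le] at key
  linarith

/-- Forward optimality condition: if `S*` is optimal then, for every `j` and every
`T ⊆ {1,…,j}`, `F(S*_{≤j}, R(S*_{>j})) ≥ F(T, R(S*_{>j}))`. Jobs are numbered
`1,…,n`, with job `t` corresponding to the index `i : Fin n` with `i.val + 1 = t`,
so `{1,…,j}` is `{i : i.val < j}`. -/
theorem forward_optimality (n : ℕ) (pr r c : Fin n → ℝ)
    (hpr : ∀ j, 0 ≤ pr j ∧ pr j < 1) (hr : ∀ j, 0 ≤ r j) (hc : ∀ j, 0 ≤ c j)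
    (Sstar : Finset (Fin n))
    (hopt : ∀ S : Finset (Fin n), netz pr r c S ≤ netz pr r c Sstar)
    (j : ℕ) (hj : j ≤ n)
    (T : Finset (Fin n)) (hT : ∀ i ∈ T, i.val < j) :
    Ffun pr r c T (Rexp pr r (Sstar.filter (fun i => j ≤ i.val))) ≤
      Ffun pr r c (Sstar.filter (fun i => i.val < j))
        (Rexp pr r (Sstar.filter (fun i => j ≤ i.val))) :=
  forward_optimality_general n pr r c Sstar hopt j T hT
end

section
/- Correctness of the dynamic programming recurrence: suppose all costs c_j are natural numbers, and for i ∈ {1,…,n+1} and b ∈ ℕ define V(b,i) = max{R(S) : S ⊆ {i,…,n}, c(S) ≤ b} (so V(b, n+1) = 0, since only S = ∅ is admissible). Then for every i ∈ {1,…,n} and b ∈ ℕ: if b < c_i then V(b,i) = V(b,i+1), and if b ≥ c_i then V(b,i) = max{ V(b,i+1), π_i·(r_i + V(b − c_i, i+1)) }. -/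
/-- The dynamic-programming value function
`V(b,i) = max{ R(S) : S ⊆ {i,…,n}, c(S) ≤ b }`. Jobs are numbered `1,…,n`, with
job `t` corresponding to the index `x : Fin n` with `x.val + 1 = t`, so
`S ⊆ {i,…,n}` means `∀ x ∈ S, i ≤ x.val + 1`. -/
def Vdp {n : ℕ} (pr r : Fin n → ℝ) (c : Fin n → ℕ) (b : ℕ) (i : ℕ) : ℝ :=
  ((Finset.univ : Finset (Fin n)).powerset.filter
      (fun S => (∀ x ∈ S, i ≤ x.val + 1) ∧ ∑ j ∈ S, c j ≤ b)).sup'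
    ⟨∅, by simp⟩ (Rexp pr r)

/-!
An admissible set for `V(b,i)` either omits job `i`, and is then admissible for `V(b,i+1)`,
or contains it. In the second case job `i` is sequenced first, so
`R({i} ∪ T) = π_i (r_i + R(T))` with `T` admissible for `V(b - c_i, i+1)`; conversely every such
`T` extends to `{i} ∪ T`. When `b < c_i` the second case cannot occur.
-/

variable {n : ℕ} (pr r : Fin n → ℝ) (c : Fin n → ℕ)

lemma Rexp_empty : Rexp pr r ∅ = 0 := by
  simp [Rexp]

lemma Rexp_insert_of_forall_lt {k : Fin n} {S : Finset (Fin n)} (hS : ∀ x ∈ S, k < x) :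
    Rexp pr r (insert k S) = pr k * (r k + Rexp pr r S) := by
  have hk : k ∉ S := fun h => lt_irrefl k (hS k h)
  have hfirst : (insert k S).filter (· ≤ k) = {k} := by
    rw [Finset.filter_insert, if_pos le_rfl,
      Finset.filter_eq_empty_iff.2 fun x hx => not_le.2 (hS x hx), insert_empty_eq]
  have hlater : ∀ j ∈ S, ∏ i ∈ (insert k S).filter (· ≤ j), pr i
      = pr k * ∏ i ∈ S.filter (· ≤ j), pr i := fun j hj => by
    rw [Finset.filter_insert, if_pos (hS j hj).le,
      Finset.prod_insert fun h => hk (Finset.mem_filter.1 h).1]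
  rw [Rexp, Finset.sum_insert hk, hfirst, Finset.prod_singleton, Finset.sum_congr rfl fun j hj => by
    rw [hlater j hj], Rexp, mul_add, Finset.mul_sum]
  simp only [mul_left_comm, mul_comm (r k)]

def feasibleSets (b i : ℕ) : Finset (Finset (Fin n)) :=
  (Finset.univ : Finset (Fin n)).powerset.filter
    (fun S => (∀ x ∈ S, i ≤ x.val + 1) ∧ ∑ j ∈ S, c j ≤ b)

variable {pr r c}
variable {b i : ℕ} {k : Fin n} {S : Finset (Fin n)}

lemma mem_feasibleSets :
    S ∈ feasibleSets c b i ↔ (∀ x ∈ S, i ≤ x.val + 1) ∧ ∑ j ∈ S, c j ≤ b := by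
  simp [feasibleSets]

lemma empty_mem_feasibleSets : ∅ ∈ feasibleSets c b i := by
  simp [mem_feasibleSets]

lemma Rexp_le_Vdp (hS : S ∈ feasibleSets c b i) : Rexp pr r S ≤ Vdp pr r c b i :=
  Finset.le_sup' (Rexp pr r) hS

lemma Vdp_le_iff {a : ℝ} :
    Vdp pr r c b i ≤ a ↔ ∀ S ∈ feasibleSets c b i, Rexp pr r S ≤ a :=
  Finset.sup'_le_iff _ _

variable (pr r c b i) in
lemma exists_Vdp_eq : ∃ S ∈ feasibleSets c b i, Vdp pr r c b i = Rexp pr r S :=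
  Finset.exists_mem_eq_sup' _ _

lemma Vdp_eq_zero_of_lt (hi : n < i) : Vdp pr r c b i = 0 := by
  refine le_antisymm (Vdp_le_iff.2 fun S hS => ?_)
    (Rexp_empty pr r ▸ Rexp_le_Vdp empty_mem_feasibleSets)
  obtain rfl : S = ∅ := Finset.eq_empty_of_forall_notMem fun x hx => by
    have := (mem_feasibleSets.1 hS).1 x hx
    omega
  exact (Rexp_empty pr r).le

lemma feasibleSets_subset_of_le {i' : ℕ} (h : i ≤ i') :
    feasibleSets c b i' ⊆ feasibleSets c b i :=
  fun S hS => by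
    rw [mem_feasibleSets] at hS ⊢
    exact ⟨fun x hx => h.trans (hS.1 x hx), hS.2⟩

lemma Vdp_le_Vdp_of_le {i' : ℕ} (h : i ≤ i') : Vdp pr r c b i' ≤ Vdp pr r c b i :=
  Finset.sup'_mono _ (feasibleSets_subset_of_le h) _

lemma lt_of_mem_feasibleSets (hS : S ∈ feasibleSets c b (k.val + 2)) : ∀ x ∈ S, k < x :=
  fun x hx => Fin.lt_def.2 (by have := (mem_feasibleSets.1 hS).1 x hx; omega)

lemma mem_feasibleSets_of_notMem (hS : S ∈ feasibleSets c b (k.val + 1)) (hk : k ∉ S) :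
    S ∈ feasibleSets c b (k.val + 2) := by
  rw [mem_feasibleSets] at hS ⊢
  refine ⟨fun x hx => ?_, hS.2⟩
  have hxk : k.val ≠ x.val := fun h => hk (Fin.ext h ▸ hx)
  have := hS.1 x hx
  omega

lemma notMem_of_mem_feasibleSets (hS : S ∈ feasibleSets c b i) (hb : b < c k) : k ∉ S :=
  fun hk => (Finset.single_le_sum (fun j _ => Nat.zero_le (c j)) hk).trans
    (mem_feasibleSets.1 hS).2 |>.not_gt hb

lemma erase_mem_feasibleSets (hS : S ∈ feasibleSets c b (k.val + 1)) (hk : k ∈ S) :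
    S.erase k ∈ feasibleSets c (b - c k) (k.val + 2) := by
  rw [mem_feasibleSets] at hS ⊢
  have hcost := Finset.add_sum_erase S c hk
  refine ⟨fun x hx => ?_, by omega⟩
  have hxk : k.val ≠ x.val := fun h => Finset.ne_of_mem_erase hx (Fin.ext h).symm
  have := hS.1 x (Finset.mem_of_mem_erase hx)
  omega

lemma insert_mem_feasibleSets (hS : S ∈ feasibleSets c (b - c k) (k.val + 2)) (hb : c k ≤ b) :
    insert k S ∈ feasibleSets c b (k.val + 1) := by
  have hk : k ∉ S := fun h => lt_irrefl k (lt_of_mem_feasibleSets hS k h)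
  rw [mem_feasibleSets] at hS ⊢
  refine ⟨(Finset.forall_mem_insert _ _ _).2
    ⟨le_rfl, fun x hx => by have := hS.1 x hx; omega⟩, ?_⟩
  rw [Finset.sum_insert hk]
  omega

lemma Vdp_of_lt_cost (hb : b < c k) : Vdp pr r c b (k.val + 1) = Vdp pr r c b (k.val + 2) := by
  have hsets : feasibleSets c b (k.val + 1) = feasibleSets c b (k.val + 2) :=
    subset_antisymm
      (fun S hS => mem_feasibleSets_of_notMem hS (notMem_of_mem_feasibleSets hS hb))
      (feasibleSets_subset_of_le (by omega))
  exact Finset.sup'_congr _ hsets fun _ _ => rfl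

lemma Vdp_of_cost_le (hpr : 0 ≤ pr k) (hb : c k ≤ b) :
    Vdp pr r c b (k.val + 1) =
      max (Vdp pr r c b (k.val + 2)) (pr k * (r k + Vdp pr r c (b - c k) (k.val + 2))) := by
  refine le_antisymm (Vdp_le_iff.2 fun S hS => ?_) (max_le (Vdp_le_Vdp_of_le (by omega)) ?_)
  · by_cases hk : k ∈ S
    · refine le_max_of_le_right ?_
      have herase := erase_mem_feasibleSets hS hk
      rw [← Finset.insert_erase hk, Rexp_insert_of_forall_lt pr r (lt_of_mem_feasibleSets herase)]
      gcongr
      exact Rexp_le_Vdp herase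
    · exact le_max_of_le_left (Rexp_le_Vdp (mem_feasibleSets_of_notMem hS hk))
  · obtain ⟨S, hS, hV⟩ := exists_Vdp_eq pr r c (b - c k) (k.val + 2)
    rw [hV, ← Rexp_insert_of_forall_lt pr r (lt_of_mem_feasibleSets hS)]
    exact Rexp_le_Vdp (insert_mem_feasibleSets hS hb)

theorem dp_recurrence_general (n : ℕ) (pr r : Fin n → ℝ) (c : Fin n → ℕ)
    (hpr : ∀ j, 0 ≤ pr j ∧ pr j < 1) :
    (∀ b : ℕ, Vdp pr r c b (n + 1) = 0) ∧
    ∀ (k : Fin n) (b : ℕ),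
      (b < c k → Vdp pr r c b (k.val + 1) = Vdp pr r c b (k.val + 2)) ∧
      (c k ≤ b → Vdp pr r c b (k.val + 1) =
        max (Vdp pr r c b (k.val + 2))
          (pr k * (r k + Vdp pr r c (b - c k) (k.val + 2)))) :=
  ⟨fun _ => Vdp_eq_zero_of_lt n.lt_succ_self,
    fun k _ => ⟨Vdp_of_lt_cost, Vdp_of_cost_le (hpr k).1⟩⟩

/-- Correctness of the DP recurrence: `V(b, n+1) = 0`, and for every job
`i ∈ {1,…,n}` (given as `k : Fin n` with `i = k.val + 1`) and budget `b`:
if `b < c_i` then `V(b,i) = V(b,i+1)`, and if `b ≥ c_i` then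
`V(b,i) = max{ V(b,i+1), π_i·(r_i + V(b − c_i, i+1)) }`. -/
theorem dp_recurrence (n : ℕ) (pr r : Fin n → ℝ) (c : Fin n → ℕ)
    (hpr : ∀ j, 0 ≤ pr j ∧ pr j < 1) (hr : ∀ j, 0 ≤ r j) :
    (∀ b : ℕ, Vdp pr r c b (n + 1) = 0) ∧
    ∀ (k : Fin n) (b : ℕ),
      (b < c k → Vdp pr r c b (k.val + 1) = Vdp pr r c b (k.val + 2)) ∧
      (c k ≤ b → Vdp pr r c b (k.val + 1) =
        max (Vdp pr r c b (k.val + 2))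
          (pr k * (r k + Vdp pr r c (b - c k) (k.val + 2)))) :=
  dp_recurrence_general n pr r c hpr
end

section
/- Position-based upper bound: for every S ⊆ {1,…,n}, z(S) ≤ Σ_{j∈S} max{0, π_j r_j · Π_j^{(k_j − 1)} − c_j}, where k_j = |{i ∈ S : i ≤ j}| is the position of job j in S, and Π_j^{(m)} denotes the product of the m largest values among π_1,…,π_{j−1} (with Π_j^{(0)} = 1). -/
/-- `Π_j^{(m)}`: the product of the `m` largest values among `π_1,…,π_{j−1}`
(the multiset of values `π_i` for `i < j`), with `Π_j^{(0)} = 1`. -/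
noncomputable def topProd {n : ℕ} (pr : Fin n → ℝ) (j : Fin n) (m : ℕ) : ℝ :=
  (((((Finset.Iio j).val.map pr).sort (· ≤ ·)).reverse.take m)).prod

section SortedProducts

variable {R : Type*} [CommSemiring R] [PartialOrder R] [IsOrderedRing R]

theorem List.prod_take_le_prod_take_cons {l : List R} {a : R} (hl : l.Pairwise (· ≥ ·))
    (hnonneg : ∀ x ∈ l, 0 ≤ x) (ha : ∀ x ∈ l, x ≤ a) {k : ℕ} (hk : k ≤ l.length) :
    (l.take k).prod ≤ ((a :: l).take k).prod := by
  induction l generalizing a k with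
  | nil => simp [Nat.le_zero.mp hk]
  | cons b l ih =>
    cases k with
    | zero => simp
    | succ k =>
      have hb : 0 ≤ b := hnonneg b (by simp)
      have hba : b ≤ a := ha b (by simp)
      simp only [List.take_succ_cons, List.prod_cons]
      gcongr
      · exact List.prod_nonneg fun x hx => hnonneg x (by simp [List.mem_of_mem_take hx])
      · exact hb.trans hba
      · exact ih hl.of_cons (fun x hx => hnonneg x (by simp [hx]))
          (fun x hx => List.rel_of_pairwise_cons hl hx) (by simpa using hk)

theorem Multiset.prod_le_prod_take_of_le {l : List R} (hl : l.Pairwise (· ≥ ·))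
    (hnonneg : ∀ x ∈ l, 0 ≤ x) {s : Multiset R} (hs : s ≤ l) :
    s.prod ≤ (l.take (Multiset.card s)).prod := by
  induction l generalizing s with
  | nil => simp [Multiset.le_zero.mp (by simpa using hs)]
  | cons a l ih =>
    have hnonneg' : ∀ x ∈ l, 0 ≤ x := fun x hx => hnonneg x (by simp [hx])
    by_cases has : a ∈ s
    · obtain ⟨t, rfl⟩ := Multiset.exists_cons_of_mem has
      have ht : t ≤ l := (Multiset.cons_le_cons_iff a).mp (by simpa using hs)
      simp only [Multiset.prod_cons, Multiset.card_cons, List.take_succ_cons, List.prod_cons]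
      exact mul_le_mul_of_nonneg_left (ih hl.of_cons hnonneg' ht) (hnonneg a (by simp))
    · have ht : s ≤ l := (Multiset.le_cons_of_notMem has).mp (by simpa using hs)
      have hcard : Multiset.card s ≤ l.length := by simpa using Multiset.card_le_card ht
      exact (ih hl.of_cons hnonneg' ht).trans <| List.prod_take_le_prod_take_cons hl.of_cons
        hnonneg' (fun x hx => List.rel_of_pairwise_cons hl hx) hcard

end SortedProducts

theorem prod_le_topProd {n : ℕ} {pr : Fin n → ℝ} (hpr : ∀ i, 0 ≤ pr i) {j : Fin n}
    {T : Finset (Fin n)} (hT : T ⊆ Finset.Iio j) :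
    ∏ i ∈ T, pr i ≤ topProd pr j T.card := by
  set l := (((Finset.Iio j).val.map pr).sort (· ≤ ·)).reverse
  have hl : (l : Multiset ℝ) = (Finset.Iio j).val.map pr := by
    simp only [l, Multiset.coe_reverse, Multiset.sort_eq]
  have hsorted : l.Pairwise (· ≥ ·) := List.pairwise_reverse.mpr (Multiset.pairwise_sort _ _)
  have hnonneg : ∀ x ∈ l, 0 ≤ x := by
    intro x hx
    obtain ⟨i, -, rfl⟩ := Multiset.mem_map.mp (hl ▸ (Multiset.mem_coe.mpr hx))
    exact hpr i
  have hsub : T.val.map pr ≤ l := hl ▸ Multiset.map_le_map (Finset.val_le_iff.mpr hT)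
  have := Multiset.prod_le_prod_take_of_le hsorted hnonneg hsub
  rwa [Multiset.card_map, ← Finset.prod_eq_multiset_prod] at this

theorem Finset.filter_le_eq_insert_filter_lt {α : Type*} [LinearOrder α] {S : Finset α} {j : α}
    (hj : j ∈ S) : S.filter (· ≤ j) = insert j (S.filter (· < j)) := by
  ext i
  rw [Finset.mem_insert, Finset.mem_filter, Finset.mem_filter, le_iff_lt_or_eq]
  constructor
  · rintro ⟨hi, hlt | rfl⟩
    exacts [Or.inr ⟨hi, hlt⟩, Or.inl rfl]
  · rintro (rfl | ⟨hi, hlt⟩)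
    exacts [⟨hj, Or.inr rfl⟩, ⟨hi, Or.inl hlt⟩]

theorem reward_le_position_bound {n : ℕ} {pr r : Fin n → ℝ} (hpr : ∀ i, 0 ≤ pr i)
    (hr : ∀ i, 0 ≤ r i) {S : Finset (Fin n)} {j : Fin n} (hj : j ∈ S) :
    r j * ∏ i ∈ S.filter (· ≤ j), pr i ≤
      pr j * r j * topProd pr j ((S.filter (· ≤ j)).card - 1) := by
  have hj' : j ∉ S.filter (· < j) := by simp
  rw [Finset.filter_le_eq_insert_filter_lt hj, Finset.prod_insert hj',
    Finset.card_insert_of_notMem hj', Nat.add_sub_cancel, ← mul_assoc, mul_comm (r j)]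
  exact mul_le_mul_of_nonneg_left
    (prod_le_topProd hpr fun i hi => Finset.mem_Iio.mpr (Finset.mem_filter.mp hi).2)
    (mul_nonneg (hpr j) (hr j))

theorem position_upper_bound_general (n : ℕ) (pr r c : Fin n → ℝ)
    (hpr : ∀ j, 0 ≤ pr j ∧ pr j < 1) (hr : ∀ j, 0 ≤ r j)
    (S : Finset (Fin n)) :
    netz pr r c S ≤
      ∑ j ∈ S, max 0
        (pr j * r j * topProd pr j ((S.filter (fun i => i ≤ j)).card - 1) - c j) := by
  rw [netz, Rexp, cst, ← Finset.sum_sub_distrib]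
  refine Finset.sum_le_sum fun j hj => le_max_of_le_right ?_
  exact sub_le_sub_right (reward_le_position_bound (fun i => (hpr i).1) hr hj) (c j)

/-- Position-based upper bound: for every `S ⊆ {1,…,n}`,
`z(S) ≤ Σ_{j∈S} max{0, π_j r_j · Π_j^{(k_j − 1)} − c_j}`, where
`k_j = |{i ∈ S : i ≤ j}|` is the position of job `j` within `S`. -/
theorem position_upper_bound (n : ℕ) (pr r c : Fin n → ℝ)
    (hpr : ∀ j, 0 ≤ pr j ∧ pr j < 1) (hr : ∀ j, 0 ≤ r j) (hc : ∀ j, 0 ≤ c j)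
    (hZ : ∀ i j : Fin n, i ≤ j →
      pr j * r j / (1 - pr j) ≤ pr i * r i / (1 - pr i))
    (S : Finset (Fin n)) :
    netz pr r c S ≤
      ∑ j ∈ S, max 0
        (pr j * r j * topProd pr j ((S.filter (fun i => i ≤ j)).card - 1) - c j) :=
  position_upper_bound_general n pr r c hpr hr S
end
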